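/- arXiv:math/9808049 — 9 statements merged into one kernel-verified Lean document; each statement's English description precedes it below -/
import Mathlib

section
/- In the repeated solicitation model with Poisson(v) prior, the expected total yield satisfies E[Y] = v·E[F(T)], where Y = X_1 + ... + X_{T-1}, and F(k) = π_1 + ... + π_k is the distribution function of U_1. -/
/-!
Since `X T = 0`, the yield is `Y = ∑_{n ≤ T} X n = ∑_{m ≥ 0} X (m + 1) · 1{T > m}`, and the
event `{T > m} = {X 1 ≠ 0, …, X m ≠ 0}` is independent of `X (m + 1)` (Wald's argument). Hence
`E[Y] = ∑_m E[X (m + 1)] P(T > m) = v ∑_m π (m + 1) P(T > m) = v E[F T]`, the last step because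
`F T = ∑_m π (m + 1) · 1{T > m}`.
-/

open MeasureTheory ProbabilityTheory Finset
open scoped ENNReal NNReal

namespace ProbabilityTheory

lemma hasSum_natCast_mul_poissonMeasure_real_singleton (r : ℝ≥0) :
    HasSum (fun n : ℕ => n * (poissonMeasure r).real {n}) r := by
  have h := (hasSum_one_poissonMeasure r).mul_left (r : ℝ)
  rw [mul_one] at h
  refine (hasSum_nat_add_iff' 1).mp ?_
  rw [sum_range_one, Nat.cast_zero, zero_mul, sub_zero]
  have hshift : (fun n : ℕ => ((n + 1 : ℕ) : ℝ) * (poissonMeasure r).real {n + 1})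
      = fun n => (r : ℝ) * (Real.exp (-r) * r ^ n / n.factorial) := by
    funext n
    rw [poissonMeasure_real_singleton, Nat.factorial_succ]
    push_cast
    field_simp
    ring
  exact hshift ▸ h

lemma lintegral_natCast_poissonMeasure (r : ℝ≥0) :
    ∫⁻ n, (n : ℝ≥0∞) ∂poissonMeasure r = r := by
  have h := hasSum_natCast_mul_poissonMeasure_real_singleton r
  rw [lintegral_countable', ← ENNReal.ofReal_coe_nnreal, ← h.tsum_eq,
    ENNReal.ofReal_tsum_of_nonneg (fun n => by positivity) h.summable]
  refine tsum_congr fun n => ?_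
  rw [ENNReal.ofReal_mul n.cast_nonneg, ENNReal.ofReal_natCast, ofReal_measureReal]

lemma lintegral_natCast_eq_of_poisson {Ω : Type*} [MeasurableSpace Ω] {μ : Measure Ω}
    {X : Ω → ℕ} (hX : Measurable X) {r : ℝ} (hr : 0 ≤ r)
    (hlaw : ∀ m : ℕ,
      μ {ω | X ω = m} = ENNReal.ofReal (Real.exp (-r) * r ^ m / m.factorial)) :
    ∫⁻ ω, (X ω : ℝ≥0∞) ∂μ = ENNReal.ofReal r := by
  have hmap : μ.map X = poissonMeasure r.toNNReal := Measure.ext_of_singleton fun m => by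
    rw [Measure.map_apply hX (measurableSet_singleton m), poissonMeasure_singleton,
      Real.coe_toNNReal _ hr]
    exact hlaw m
  rw [← lintegral_map (measurable_of_countable _) hX, hmap, lintegral_natCast_poissonMeasure]
  rfl

end ProbabilityTheory

lemma Nat.lt_sInf_setOf_zero_iff {x : ℕ → ℕ} (h : ∃ n, 1 ≤ n ∧ x n = 0) (m : ℕ) :
    m < sInf {n | 1 ≤ n ∧ x n = 0} ↔ ∀ k < m, x (k + 1) ≠ 0 := by
  set S := {n | 1 ≤ n ∧ x n = 0}
  constructor
  · intro hm k hk hx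
    exact Nat.notMem_of_lt_sInf (s := S) (by omega) ⟨by omega, hx⟩
  · intro hm
    by_contra! hle
    obtain ⟨hpos, hzero⟩ : sInf S ∈ S := Nat.sInf_mem h
    exact hm (sInf S - 1) (by omega) (by rwa [Nat.sub_add_cancel hpos])

lemma Finset.sum_Ico_one_eq_sum_range_succ {M : Type*} [AddCommMonoid M] (f : ℕ → M) {N : ℕ}
    (hN : f N = 0) : ∑ n ∈ Ico 1 N, f n = ∑ k ∈ range N, f (k + 1) := by
  cases N with
  | zero => simp
  | succ N =>
    rw [sum_range_succ, hN, add_zero, sum_Ico_eq_sum_range]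
    simp [add_comm]

lemma tsum_indicator_eq_sum_range {α M : Type*} [AddCommMonoid M] [TopologicalSpace M]
    (A : ℕ → Set α) (g : ℕ → α → M) {a : α} {N : ℕ}
    (hA : ∀ k, a ∈ A k ↔ k < N) :
    ∑' k, (A k).indicator (g k) a = ∑ k ∈ range N, g k a := by
  rw [tsum_eq_sum (s := range N) fun k hk =>
    Set.indicator_of_notMem (by simpa [hA] using hk) _]
  exact sum_congr rfl fun k hk => Set.indicator_of_mem ((hA k).2 (mem_range.1 hk)) _

section NoZeroBefore

variable {Ω : Type*} [MeasurableSpace Ω] {μ : Measure Ω} {Z : ℕ → Ω → ℕ}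

def noZeroBefore (Z : ℕ → Ω → ℕ) (m : ℕ) : Set Ω := {ω | ∀ k < m, Z k ω ≠ 0}

omit [MeasurableSpace Ω] in
lemma noZeroBefore_eq_preimage (Z : ℕ → Ω → ℕ) (m : ℕ) :
    noZeroBefore Z m = (fun ω (i : range m) => Z i ω) ⁻¹' {y | ∀ i, y i ≠ 0} := by
  ext ω
  simp [noZeroBefore]

lemma measurableSet_noZeroBefore (hZ : ∀ n, Measurable (Z n)) (m : ℕ) :
    MeasurableSet (noZeroBefore Z m) := by
  rw [noZeroBefore_eq_preimage]
  exact (Set.to_countable _).measurableSet.preimage (measurable_pi_lambda _ fun i => hZ i)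

lemma lintegral_indicator_noZeroBefore (hindep : iIndepFun Z μ) (hZ : ∀ n, Measurable (Z n))
    (m : ℕ) :
    ∫⁻ ω, (noZeroBefore Z m).indicator (fun ω => (Z m ω : ℝ≥0∞)) ω ∂μ
      = (∫⁻ ω, (Z m ω : ℝ≥0∞) ∂μ) * μ (noZeroBefore Z m) := by
  have hZm : Measurable fun ω => (Z m ω : ℝ≥0∞) := (measurable_of_countable _).comp (hZ m)
  have hA := measurableSet_noZeroBefore hZ m
  have hIndep : IndepFun (fun ω => (Z m ω : ℝ≥0∞))
      ((noZeroBefore Z m).indicator (1 : Ω → ℝ≥0∞)) μ := by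
    rw [noZeroBefore_eq_preimage]
    exact (hindep.indepFun_finset {m} (range m) (by simp) hZ).comp
      (φ := fun y => (y ⟨m, mem_singleton_self m⟩ : ℝ≥0∞))
      (ψ := Set.indicator {y | ∀ i, y i ≠ 0} (1 : (range m → ℕ) → ℝ≥0∞))
      (measurable_of_countable _) (measurable_of_countable _)
  calc ∫⁻ ω, (noZeroBefore Z m).indicator (fun ω => (Z m ω : ℝ≥0∞)) ω ∂μ
      = ∫⁻ ω, (Z m ω : ℝ≥0∞) * (noZeroBefore Z m).indicator 1 ω ∂μ := by
        congr 1 with ω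
        by_cases hω : ω ∈ noZeroBefore Z m <;> simp [hω]
    _ = (∫⁻ ω, (Z m ω : ℝ≥0∞) ∂μ) * μ (noZeroBefore Z m) := by
        rw [← lintegral_indicator_one hA]
        exact lintegral_mul_eq_lintegral_mul_lintegral_of_indepFun hZm
          (measurable_one.indicator hA) hIndep

end NoZeroBefore

section FirstZero

variable {Ω : Type*} (X : ℕ → Ω → ℕ) {ω : Ω}

lemma mem_noZeroBefore_iff_lt_sInf (h : ∃ n, 1 ≤ n ∧ X n ω = 0) (m : ℕ) :
    ω ∈ noZeroBefore (fun n => X (n + 1)) m ↔ m < sInf {n | 1 ≤ n ∧ X n ω = 0} :=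
  (Nat.lt_sInf_setOf_zero_iff h m).symm

lemma natCast_sum_Ico_sInf_eq_tsum_indicator (h : ∃ n, 1 ≤ n ∧ X n ω = 0) :
    ((∑ n ∈ Ico 1 (sInf {n | 1 ≤ n ∧ X n ω = 0}), X n ω : ℕ) : ℝ≥0∞)
      = ∑' m, (noZeroBefore (fun n => X (n + 1)) m).indicator
          (fun ω => (X (m + 1) ω : ℝ≥0∞)) ω := by
  rw [tsum_indicator_eq_sum_range _ _ (mem_noZeroBefore_iff_lt_sInf X h),
    sum_Ico_one_eq_sum_range_succ _ (Nat.sInf_mem h).2]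
  push_cast
  rfl

lemma ofReal_sum_Icc_sInf_eq_tsum_indicator (h : ∃ n, 1 ≤ n ∧ X n ω = 0) {π : ℕ → ℝ}
    (hπ : ∀ n, 1 ≤ n → 0 ≤ π n) :
    ENNReal.ofReal (∑ n ∈ Icc 1 (sInf {n | 1 ≤ n ∧ X n ω = 0}), π n)
      = ∑' m, (noZeroBefore (fun n => X (n + 1)) m).indicator
          (fun _ => ENNReal.ofReal (π (m + 1))) ω := by
  rw [tsum_indicator_eq_sum_range _ _ (mem_noZeroBefore_iff_lt_sInf X h),
    ← Ico_add_one_right_eq_Icc, sum_Ico_eq_sum_range,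
    ENNReal.ofReal_sum_of_nonneg fun k _ => hπ _ (by omega)]
  simp [add_comm]

end FirstZero

theorem expected_total_yield_general
    {Ω : Type*} [MeasurableSpace Ω] (μ : Measure Ω)
    (π : ℕ → ℝ) (hπ : ∀ n, 1 ≤ n → 0 ≤ π n)
    (v : ℝ) (hv : 0 < v)
    (X : ℕ → Ω → ℕ) (hXm : ∀ n, Measurable (X n))
    (hindep : iIndepFun (fun n : ℕ => X (n + 1)) μ)
    (hX : ∀ n, 1 ≤ n → ∀ m : ℕ, μ {ω | X n ω = m}
        = ENNReal.ofReal (Real.exp (-(π n * v)) * (π n * v) ^ m / m.factorial))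
    (T : Ω → ℕ) (hT : ∀ ω, T ω = sInf {n | 1 ≤ n ∧ X n ω = 0})
    (hTfin : ∀ᵐ ω ∂μ, ∃ n, 1 ≤ n ∧ X n ω = 0)
    (Y : Ω → ℕ) (hY : ∀ ω, Y ω = ∑ n ∈ Finset.Ico 1 (T ω), X n ω)
    (F : ℕ → ℝ) (hF : ∀ k, F k = ∑ n ∈ Finset.Icc 1 k, π n) :
    ∫⁻ ω, (Y ω : ℝ≥0∞) ∂μ
      = ENNReal.ofReal v * ∫⁻ ω, ENNReal.ofReal (F (T ω)) ∂μ := by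
  set A := noZeroBefore fun n => X (n + 1)
  have hA : ∀ m, MeasurableSet (A m) := measurableSet_noZeroBefore fun n => hXm (n + 1)
  have hYsum : ∀ᵐ ω ∂μ, (Y ω : ℝ≥0∞)
      = ∑' m, (A m).indicator (fun ω => (X (m + 1) ω : ℝ≥0∞)) ω := by
    filter_upwards [hTfin] with ω hω
    rw [hY, hT]
    exact natCast_sum_Ico_sInf_eq_tsum_indicator X hω
  have hFsum : ∀ᵐ ω ∂μ, ENNReal.ofReal (F (T ω))
      = ∑' m, (A m).indicator (fun _ => ENNReal.ofReal (π (m + 1))) ω := by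
    filter_upwards [hTfin] with ω hω
    rw [hF, hT]
    exact ofReal_sum_Icc_sInf_eq_tsum_indicator X hω hπ
  have hmean (m : ℕ) :
      ∫⁻ ω, (X (m + 1) ω : ℝ≥0∞) ∂μ = ENNReal.ofReal (π (m + 1) * v) :=
    lintegral_natCast_eq_of_poisson (hXm _) (mul_nonneg (hπ _ (by omega)) hv.le)
      (hX _ (by omega))
  calc ∫⁻ ω, (Y ω : ℝ≥0∞) ∂μ
      = ∑' m, ∫⁻ ω, (A m).indicator (fun ω => (X (m + 1) ω : ℝ≥0∞)) ω ∂μ := by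
        rw [lintegral_congr_ae hYsum, lintegral_tsum]
        exact fun m =>
          (((measurable_of_countable _).comp (hXm _)).indicator (hA m)).aemeasurable
    _ = ∑' m, ENNReal.ofReal v *
          ∫⁻ ω, (A m).indicator (fun _ => ENNReal.ofReal (π (m + 1))) ω ∂μ := by
        refine tsum_congr fun m => ?_
        rw [lintegral_indicator_noZeroBefore hindep (fun n => hXm _) m, hmean,
          lintegral_indicator_const (hA m), mul_comm (π _), ENNReal.ofReal_mul hv.le,
          mul_assoc]
    _ = ENNReal.ofReal v * ∫⁻ ω, ENNReal.ofReal (F (T ω)) ∂μ := by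
        rw [ENNReal.tsum_mul_left, lintegral_congr_ae hFsum, lintegral_tsum fun m =>
          (measurable_const.indicator (hA m)).aemeasurable]

/-- **Expected total yield.** In the repeated solicitation model with Poisson(v) prior
(so that the `X n` are independent with `X n ~ Poisson(π n · v)` for `n ≥ 1`),
with `T = min {n ≥ 1 : X n = 0}` a.s. finite and `Y = X 1 + ⋯ + X (T-1)`,
one has `E[Y] = v · E[F(T)]` where `F k = π 1 + ⋯ + π k`. -/
theorem expected_total_yield
    {Ω : Type*} [MeasurableSpace Ω] (μ : Measure Ω) [IsProbabilityMeasure μ]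
    (π : ℕ → ℝ) (hπ : ∀ n, 1 ≤ n → 0 ≤ π n) (hπsum : ∑' n : ℕ, π (n + 1) ≤ 1)
    (v : ℝ) (hv : 0 < v)
    (X : ℕ → Ω → ℕ) (hXm : ∀ n, Measurable (X n))
    (hindep : iIndepFun (fun n : ℕ => X (n + 1)) μ)
    (hX : ∀ n, 1 ≤ n → ∀ m : ℕ, μ {ω | X n ω = m}
        = ENNReal.ofReal (Real.exp (-(π n * v)) * (π n * v) ^ m / m.factorial))
    (T : Ω → ℕ) (hT : ∀ ω, T ω = sInf {n | 1 ≤ n ∧ X n ω = 0})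
    (hTfin : ∀ᵐ ω ∂μ, ∃ n, 1 ≤ n ∧ X n ω = 0)
    (Y : Ω → ℕ) (hY : ∀ ω, Y ω = ∑ n ∈ Finset.Ico 1 (T ω), X n ω)
    (F : ℕ → ℝ) (hF : ∀ k, F k = ∑ n ∈ Finset.Icc 1 k, π n) :
    ∫⁻ ω, (Y ω : ℝ≥0∞) ∂μ
      = ENNReal.ofReal v * ∫⁻ ω, ENNReal.ofReal (F (T ω)) ∂μ :=
  expected_total_yield_general μ π hπ v hv X hXm hindep hX T hT hTfin Y hY F hF
end

section
/- In the repeated solicitation model with Poisson(v) prior, the expected total marketing effort satisfies E[M] = v·E[H(T)], where H(k) = E[min(U_1, k)] and M = Σ_s (U_s 1{U_s < T} + T 1{U_s > T}). -/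
open MeasureTheory ProbabilityTheory
open scoped ENNReal NNReal

/-!
Condition on the number `r` of clients and on their response times. A client's effort depends on
the others only through the set of response times that occur, so by exchangeability the expected
total effort of `r + 1` clients is `r + 1` times that of the first one. If the other `r` clients
stop the solicitation at `t`, adding a client with response time `a` either leaves the stopping
time at `t` or, when `a = t`, pushes it past `a`; either way that client's effort is `a ∧ t`,
of mean `H t`. Finally `(r + 1) P(S₀ = r + 1) = v P(S₀ = r)`, so summing over `r` (the Mecke
equation for the Poisson number of clients) turns `E[M]` into `v E[H(T)]`.
-/

namespace MarketingEffort

open Set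

/-- The paper's `T`, as a function of the set of response times that occur. -/
noncomputable def firstGap (s : Set ℕ) : ℕ := sInf {n | 1 ≤ n ∧ n ∉ s}

section firstGap

variable {s : Set ℕ}

lemma gaps_nonempty (hs : s.Finite) : {n | 1 ≤ n ∧ n ∉ s}.Nonempty := by
  obtain ⟨b, hb⟩ := hs.bddAbove
  exact ⟨b + 1, Nat.le_add_left 1 b, fun h => by have := hb h; omega⟩

lemma one_le_firstGap (hs : s.Finite) : 1 ≤ firstGap s :=
  (Nat.sInf_mem (gaps_nonempty hs)).1

lemma firstGap_notMem (hs : s.Finite) : firstGap s ∉ s :=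
  (Nat.sInf_mem (gaps_nonempty hs)).2

lemma firstGap_insert_of_ne (hs : s.Finite) {a : ℕ} (ha : a ≠ firstGap s) :
    firstGap (insert a s) = firstGap s := by
  have hmem : firstGap s ∈ {n | 1 ≤ n ∧ n ∉ insert a s} :=
    ⟨one_le_firstGap hs, by simp [Ne.symm ha, firstGap_notMem hs]⟩
  refine le_antisymm (Nat.sInf_le hmem) (Nat.sInf_le ?_)
  obtain ⟨h1, h2⟩ := Nat.sInf_mem ⟨_, hmem⟩
  exact ⟨h1, fun h => h2 (mem_insert_of_mem a h)⟩

lemma firstGap_lt_firstGap_insert_self (hs : s.Finite) :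
    firstGap s < firstGap (insert (firstGap s) s) := by
  set t := firstGap (insert (firstGap s) s)
  obtain ⟨h1, h2⟩ : 1 ≤ t ∧ t ∉ insert (firstGap s) s :=
    Nat.sInf_mem (gaps_nonempty (hs.insert (firstGap s)))
  refine lt_of_le_of_ne (Nat.sInf_le ⟨h1, fun h => h2 (mem_insert_of_mem _ h)⟩) fun h => ?_
  exact h2 (h ▸ mem_insert _ _)

end firstGap

/-- Response time `0` encodes a client who never responds; `t` is the stopping time. -/
def effort (a t : ℕ) : ℕ := if 1 ≤ a ∧ a < t then a else t

/-- `a ∧ k`, where `0` encodes the response time `∞`. -/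
def truncMin (a k : ℕ) : ℕ := if a = 0 then k else min a k

lemma effort_firstGap_insert {s : Set ℕ} (hs : s.Finite) (a : ℕ) :
    effort a (firstGap (insert a s)) = truncMin a (firstGap s) := by
  have h1 := one_le_firstGap hs
  rcases eq_or_ne a 0 with rfl | ha
  · rw [firstGap_insert_of_ne hs (by omega)]
    simp [effort, truncMin]
  rcases eq_or_ne a (firstGap s) with rfl | hne
  · simp [effort, truncMin, ha, h1, firstGap_lt_firstGap_insert_self hs]
  · rw [firstGap_insert_of_ne hs hne, effort, truncMin, if_neg ha]
    split_ifs <;> omega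

/-- The paper's `H k = E[U₁ ∧ k]`, for the law `p` of `U₁`. -/
noncomputable def expectedMin (p : ℕ → ℝ≥0∞) (k : ℕ) : ℝ≥0∞ := ∑' a, p a * truncMin a k

lemma expectedMin_eq {p : ℕ → ℝ≥0∞} (hp : ∑' a, p a = 1) (k : ℕ) :
    expectedMin p k
      = (∑ n ∈ Finset.Icc 1 k, (n : ℝ≥0∞) * p n) + k * (1 - ∑ n ∈ Finset.Icc 1 k, p n) := by
  have hcompl : ∑' a : ↥((Finset.Icc 1 k : Set ℕ)ᶜ), p a = 1 - ∑ n ∈ Finset.Icc 1 k, p n :=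
    ENNReal.eq_sub_of_add_eq' ENNReal.one_ne_top <| by
      rw [add_comm, ENNReal.sum_add_tsum_compl, hp]
  rw [expectedMin, ← ENNReal.sum_add_tsum_compl (Finset.Icc 1 k), ← hcompl,
    ← ENNReal.tsum_mul_left]
  congr 1
  · refine Finset.sum_congr rfl fun n hn => ?_
    obtain ⟨h1, h2⟩ := Finset.mem_Icc.mp hn
    rw [truncMin, if_neg (by omega), min_eq_left h2, mul_comm]
  · refine tsum_congr fun a => ?_
    have : ¬(1 ≤ (a : ℕ) ∧ (a : ℕ) ≤ k) := by simpa using a.2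
    rw [truncMin]
    split_ifs with h0
    · rw [mul_comm]
    · rw [min_eq_right (by omega), mul_comm]

lemma tsum_prod_mul_apply_range_eq {ι : Type*} [Fintype ι] [DecidableEq ι]
    (p : ℕ → ℝ≥0∞) (F : ℕ → Set ℕ → ℝ≥0∞) (i j : ι) :
    ∑' u : ι → ℕ, (∏ k, p (u k)) * F (u i) (range u)
      = ∑' u : ι → ℕ, (∏ k, p (u k)) * F (u j) (range u) := by
  rw [← ((Equiv.swap i j).arrowCongr (Equiv.refl ℕ)).tsum_eq]
  refine tsum_congr fun u => ?_
  have hu : (Equiv.swap i j).arrowCongr (Equiv.refl ℕ) u = u ∘ Equiv.swap i j := rfl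
  rw [hu, EquivLike.range_comp]
  simp only [Function.comp_apply, Equiv.swap_apply_left]
  congr 1
  exact Equiv.prod_comp (Equiv.swap i j) (fun k => p (u k))

lemma tsum_prod_mul_apply_zero_range (p : ℕ → ℝ≥0∞) (F : ℕ → Set ℕ → ℝ≥0∞) (m : ℕ) :
    ∑' u : Fin (m + 1) → ℕ, (∏ k, p (u k)) * F (u 0) (range u)
      = ∑' w : Fin m → ℕ, (∏ k, p (w k)) * ∑' a, p a * F a (insert a (range w)) := by
  rw [← (Fin.consEquiv fun _ => ℕ).tsum_eq, ENNReal.tsum_prod', ENNReal.tsum_comm]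
  refine tsum_congr fun w => ?_
  rw [← ENNReal.tsum_mul_left]
  refine tsum_congr fun a => ?_
  rw [show (Fin.consEquiv fun _ => ℕ) (a, w) = Fin.cons a w from rfl, Fin.range_cons]
  simp only [Fin.prod_univ_succ, Fin.cons_zero, Fin.cons_succ]
  ring

lemma tsum_prod_mul_sum_effort (p : ℕ → ℝ≥0∞) (m : ℕ) :
    ∑' u : Fin (m + 1) → ℕ, (∏ k, p (u k)) * ∑ i, (effort (u i) (firstGap (range u)) : ℝ≥0∞)
      = ((m + 1 : ℕ) : ℝ≥0∞)
          * ∑' w : Fin m → ℕ, (∏ k, p (w k)) * expectedMin p (firstGap (range w)) := by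
  simp_rw [Finset.mul_sum]
  rw [Summable.tsum_finsetSum fun _ _ => ENNReal.summable]
  rw [Finset.sum_congr rfl fun i _ => tsum_prod_mul_apply_range_eq p
    (fun a s => (effort a (firstGap s) : ℝ≥0∞)) i 0]
  rw [Finset.sum_const, Finset.card_univ, Fintype.card_fin, nsmul_eq_mul,
    tsum_prod_mul_apply_zero_range p fun a s => (effort a (firstGap s) : ℝ≥0∞)]
  congr 1
  refine tsum_congr fun w => ?_
  simp only [effort_firstGap_insert (finite_range w), expectedMin]

lemma tsum_mul_eq_of_succ {Q A B : ℕ → ℝ≥0∞} {c : ℝ≥0∞}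
    (hQ : ∀ m, Q (m + 1) * ((m + 1 : ℕ) : ℝ≥0∞) = c * Q m) (hA0 : A 0 = 0)
    (hA : ∀ m, A (m + 1) = ((m + 1 : ℕ) : ℝ≥0∞) * B m) :
    ∑' r, Q r * A r = c * ∑' m, Q m * B m := by
  rw [tsum_eq_zero_add' ENNReal.summable, hA0, mul_zero, zero_add, ← ENNReal.tsum_mul_left]
  refine tsum_congr fun m => ?_
  rw [hA, ← mul_assoc, hQ, mul_assoc]

theorem tsum_poisson_mul_sum_effort {Q : ℕ → ℝ≥0∞} {c : ℝ≥0∞}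
    (hQ : ∀ m, Q (m + 1) * ((m + 1 : ℕ) : ℝ≥0∞) = c * Q m) (p : ℕ → ℝ≥0∞) :
    ∑' r, Q r * ∑' u : Fin r → ℕ,
        (∏ i, p (u i)) * ∑ i, (effort (u i) (firstGap (range u)) : ℝ≥0∞)
      = c * ∑' r, Q r * ∑' u : Fin r → ℕ,
        (∏ i, p (u i)) * expectedMin p (firstGap (range u)) :=
  tsum_mul_eq_of_succ hQ (by simp) (tsum_prod_mul_sum_effort p)

section Sampling

variable {Ω : Type*} [MeasurableSpace Ω] {μ : Measure Ω}

lemma tsum_measure_fiber_eq_one [IsProbabilityMeasure μ] {f : Ω → ℕ} (hf : Measurable f) :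
    ∑' n, μ {ω | f ω = n} = 1 := by
  change ∑' n, μ (f ⁻¹' {n}) = 1
  rw [← measure_iUnion (pairwise_disjoint_fiber f) fun n => hf (measurableSet_singleton n)]
  rw [← preimage_iUnion, iUnion_of_singleton, preimage_univ, measure_univ]

lemma measure_fiber_eq_of_forall_succ [IsProbabilityMeasure μ] {f g : Ω → ℕ}
    (hf : Measurable f) (hg : Measurable g)
    (h : ∀ n, μ {ω | f ω = n + 1} = μ {ω | g ω = n + 1}) (a : ℕ) :
    μ {ω | f ω = a} = μ {ω | g ω = a} := by
  cases a with
  | succ n => exact h n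
  | zero => ?_
  have hf1 := tsum_measure_fiber_eq_one (μ := μ) hf
  have hg1 := tsum_measure_fiber_eq_one (μ := μ) hg
  rw [tsum_eq_zero_add' ENNReal.summable] at hf1 hg1
  have htail : ∑' n, μ {ω | g ω = n + 1} ≠ ∞ :=
    ne_top_of_le_ne_top ENNReal.one_ne_top (le_add_self.trans_eq hg1)
  rw [tsum_congr h] at hf1
  exact (ENNReal.add_left_inj htail).mp (hf1.trans hg1.symm)

lemma measure_eq_and_forall_eq_mul_prod {S : Ω → ℕ} {U : ℕ → Ω → ℕ}
    (h : iIndepFun (fun o : Option ℕ => o.elim S U) μ) (r : ℕ) (u : Fin r → ℕ) :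
    μ {ω | S ω = r ∧ ∀ i : Fin r, U i ω = u i}
      = μ {ω | S ω = r} * ∏ i : Fin r, μ {ω | U i ω = u i} := by
  have hr := h.precomp (g := Option.map (Fin.val : Fin r → ℕ))
    (Option.map_injective Fin.val_injective)
  have hprod := hr.meas_iInter
    (s := fun o => (Option.map Fin.val o).elim S U ⁻¹' {o.elim r u})
    fun o => MeasurableSpace.measurableSet_comap.mpr ⟨_, measurableSet_singleton _, rfl⟩
  rw [iInter_option, Fintype.prod_option] at hprod
  simp only [Option.map_none, Option.map_some, Option.elim_none, Option.elim_some] at hprod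
  rw [show {ω | S ω = r ∧ ∀ i : Fin r, U i ω = u i} = S ⁻¹' {r} ∩ ⋂ i : Fin r, U i ⁻¹' {u i} by
    ext; simp]
  exact hprod

lemma lintegral_eq_tsum_of_measure_eq {S : Ω → ℕ} {U : ℕ → Ω → ℕ}
    (hS : Measurable S) (hU : ∀ s, Measurable (U s)) {Q p : ℕ → ℝ≥0∞}
    (hatom : ∀ r (u : Fin r → ℕ),
      μ {ω | S ω = r ∧ ∀ i : Fin r, U i ω = u i} = Q r * ∏ i, p (u i))
    (g : (r : ℕ) → (Fin r → ℕ) → ℝ≥0∞) {F : Ω → ℝ≥0∞}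
    (hF : ∀ ω, F ω = g (S ω) fun i => U i ω) :
    ∫⁻ ω, F ω ∂μ = ∑' r, Q r * ∑' u : Fin r → ℕ, (∏ i, p (u i)) * g r u := by
  set E : (Σ r, Fin r → ℕ) → Set Ω := fun e => {ω | S ω = e.1 ∧ ∀ i : Fin e.1, U i ω = e.2 i}
  have hE : ∀ e, MeasurableSet (E e) := fun e => by
    simp only [E, ofPred_and, ofPred_forall]
    exact (hS (measurableSet_singleton _)).inter
      (MeasurableSet.iInter fun i => hU i (measurableSet_singleton _))
  have hF' : ∀ ω, F ω = ∑' e, (E e).indicator (fun _ => g e.1 e.2) ω := by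
    intro ω
    have hω : ω ∈ E ⟨S ω, fun i => U i ω⟩ := ⟨rfl, fun _ => rfl⟩
    rw [tsum_eq_single ⟨S ω, fun i => U i ω⟩, indicator_of_mem hω, hF]
    rintro ⟨r, u⟩ hne
    refine indicator_of_notMem ?_ _
    rintro ⟨rfl, hu⟩
    exact hne (by simp only [funext hu])
  rw [lintegral_congr hF', lintegral_tsum fun e => (measurable_const.indicator (hE e)).aemeasurable,
    ENNReal.tsum_sigma']
  refine tsum_congr fun r => ?_
  rw [← ENNReal.tsum_mul_left]
  refine tsum_congr fun u => ?_
  rw [lintegral_indicator_const (hE ⟨r, u⟩), hatom]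
  ring

end Sampling

lemma ofReal_poisson_succ_mul {v : ℝ} (hv : 0 ≤ v) (m : ℕ) :
    ENNReal.ofReal (Real.exp (-v) * v ^ (m + 1) / (m + 1).factorial) * ((m + 1 : ℕ) : ℝ≥0∞)
      = ENNReal.ofReal v * ENNReal.ofReal (Real.exp (-v) * v ^ m / m.factorial) := by
  rw [← ENNReal.ofReal_natCast, ← ENNReal.ofReal_mul (by positivity), ← ENNReal.ofReal_mul hv,
    Nat.factorial_succ]
  congr 1
  push_cast
  field_simp
  ring

lemma ofReal_truncMean_eq {π : ℕ → ℝ} {p : ℕ → ℝ≥0∞} {k : ℕ}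
    (hπ : ∀ n ∈ Finset.Icc 1 k, 0 ≤ π n) (hp : ∀ n ∈ Finset.Icc 1 k, p n = ENNReal.ofReal (π n))
    (hle : ∑ n ∈ Finset.Icc 1 k, p n ≤ 1) :
    ENNReal.ofReal ((∑ n ∈ Finset.Icc 1 k, (n : ℝ) * π n)
        + k * (1 - ∑ n ∈ Finset.Icc 1 k, π n))
      = (∑ n ∈ Finset.Icc 1 k, (n : ℝ≥0∞) * p n) + k * (1 - ∑ n ∈ Finset.Icc 1 k, p n) := by
  have hsum : ∑ n ∈ Finset.Icc 1 k, p n = ENNReal.ofReal (∑ n ∈ Finset.Icc 1 k, π n) := by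
    rw [ENNReal.ofReal_sum_of_nonneg hπ]
    exact Finset.sum_congr rfl hp
  have hle' : ∑ n ∈ Finset.Icc 1 k, π n ≤ 1 := ENNReal.ofReal_le_one.mp (hsum ▸ hle)
  have hnπ : ∀ n ∈ Finset.Icc 1 k, 0 ≤ (n : ℝ) * π n :=
    fun n hn => mul_nonneg n.cast_nonneg (hπ n hn)
  rw [ENNReal.ofReal_add (Finset.sum_nonneg hnπ) (mul_nonneg k.cast_nonneg (by linarith)),
    ENNReal.ofReal_sum_of_nonneg hnπ, ENNReal.ofReal_mul k.cast_nonneg, ENNReal.ofReal_natCast,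
    ENNReal.ofReal_sub _ (Finset.sum_nonneg hπ), ENNReal.ofReal_one, hsum]
  congr 1
  refine Finset.sum_congr rfl fun n hn => ?_
  rw [ENNReal.ofReal_mul n.cast_nonneg, ENNReal.ofReal_natCast, hp n hn]

lemma sInf_card_filter_eq_zero_eq_firstGap (r : ℕ) (u : ℕ → ℕ) :
    sInf {n | 1 ≤ n ∧ ((Finset.range r).filter fun s => u s = n).card = 0}
      = firstGap (range fun i : Fin r => u i) := by
  simp only [Finset.card_eq_zero, Finset.filter_eq_empty_iff, Finset.mem_range, firstGap,
    mem_range, not_exists]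
  congr! 3 with n
  exact and_congr_right fun _ => ⟨fun h i => h i.isLt, fun h s hs => h ⟨s, hs⟩⟩

end MarketingEffort

open MarketingEffort

theorem expected_total_marketing_effort_general
    {Ω : Type*} [MeasurableSpace Ω] (μ : Measure Ω) [IsProbabilityMeasure μ]
    (π : ℕ → ℝ) (hπ : ∀ n, 1 ≤ n → 0 ≤ π n)
    (v : ℝ) (hv : 0 < v)
    (S0 : Ω → ℕ) (U : ℕ → Ω → ℕ)
    (hS0m : Measurable S0) (hUm : ∀ s, Measurable (U s))
    (hindep : iIndepFun
      (fun o : Option ℕ => o.elim S0 U) μ)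
    (hS0 : ∀ r : ℕ, μ {ω | S0 ω = r}
        = ENNReal.ofReal (Real.exp (-v) * v ^ r / r.factorial))
    (hU : ∀ s, ∀ n, 1 ≤ n → μ {ω | U s ω = n} = ENNReal.ofReal (π n))
    (X : ℕ → Ω → ℕ)
    (hX : ∀ n ω, X n ω = ((Finset.range (S0 ω)).filter (fun s => U s ω = n)).card)
    (T : Ω → ℕ) (hT : ∀ ω, T ω = sInf {n | 1 ≤ n ∧ X n ω = 0})
    (M : Ω → ℕ)
    (hM : ∀ ω, M ω = ∑ s ∈ Finset.range (S0 ω),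
        (if 1 ≤ U s ω ∧ U s ω < T ω then U s ω else T ω))
    (H : ℕ → ℝ)
    (hH : ∀ k, H k = (∑ n ∈ Finset.Icc 1 k, (n : ℝ) * π n)
        + (k : ℝ) * (1 - ∑ n ∈ Finset.Icc 1 k, π n)) :
    ∫⁻ ω, (M ω : ℝ≥0∞) ∂μ
      = ENNReal.ofReal v * ∫⁻ ω, ENNReal.ofReal (H (T ω)) ∂μ := by
  set p : ℕ → ℝ≥0∞ := fun a => μ {ω | U 0 ω = a}
  have hp : ∑' a, p a = 1 := tsum_measure_fiber_eq_one (hUm 0)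
  have hUp : ∀ s a, μ {ω | U s ω = a} = p a := fun s =>
    measure_fiber_eq_of_forall_succ (hUm s) (hUm 0) fun n => by
      rw [hU s _ n.succ_pos, hU 0 _ n.succ_pos]
  have hatom : ∀ r (u : Fin r → ℕ), μ {ω | S0 ω = r ∧ ∀ i : Fin r, U i ω = u i}
      = μ {ω | S0 ω = r} * ∏ i, p (u i) := fun r u => by
    simp only [measure_eq_and_forall_eq_mul_prod hindep, hUp]
  have hpoisson : ∀ m, μ {ω | S0 ω = m + 1} * ((m + 1 : ℕ) : ℝ≥0∞)
      = ENNReal.ofReal v * μ {ω | S0 ω = m} := fun m => by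
    simpa only [hS0] using ofReal_poisson_succ_mul hv.le m
  have hTgap : ∀ ω, T ω = firstGap (Set.range fun i : Fin (S0 ω) => U i ω) := fun ω => by
    simp only [hT, hX, sInf_card_filter_eq_zero_eq_firstGap]
  have hMeffort : ∀ ω, (M ω : ℝ≥0∞) = ∑ i : Fin (S0 ω),
      (effort (U i ω) (firstGap (Set.range fun i : Fin (S0 ω) => U i ω)) : ℝ≥0∞) := fun ω => by
    rw [hM, ← hTgap, ← Fin.sum_univ_eq_sum_range, Nat.cast_sum]
    rfl
  have hHT : ∀ ω, ENNReal.ofReal (H (T ω))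
      = expectedMin p (firstGap (Set.range fun i : Fin (S0 ω) => U i ω)) := fun ω => by
    rw [hH, expectedMin_eq hp, ← hTgap]
    exact ofReal_truncMean_eq (fun n hn => hπ n (Finset.mem_Icc.mp hn).1)
      (fun n hn => hU 0 n (Finset.mem_Icc.mp hn).1) (hp ▸ ENNReal.sum_le_tsum _)
  rw [lintegral_eq_tsum_of_measure_eq hS0m hUm hatom
      (fun r u => ∑ i : Fin r, (effort (u i) (firstGap (Set.range u)) : ℝ≥0∞)) hMeffort,
    lintegral_eq_tsum_of_measure_eq hS0m hUm hatom
      (fun r u => expectedMin p (firstGap (Set.range u))) hHT]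
  exact tsum_poisson_mul_sum_effort hpoisson p

/-- **Expected total marketing effort.** In the repeated solicitation model the number of
clients `S₀ ~ Poisson(v)`; client response times `U s` (with value `0` encoding "never
responds", i.e. `∞`) are i.i.d. with `P(U s = n) = π n` for `n ≥ 1`, independent of `S₀`;
`X n = #{s < S₀ : U s = n}`; `T = min {n ≥ 1 : X n = 0}` (a.s. finite);
`M = ∑_{s < S₀} (U s · 1{U s < T} + T · 1{U s > T})` is the total marketing effort.
Then `E[M] = v · E[H(T)]` where `H k = E[U₁ ∧ k] = ∑_{n=1}^k n π n + k (1 - ∑_{n=1}^k π n)`. -/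
theorem expected_total_marketing_effort
    {Ω : Type*} [MeasurableSpace Ω] (μ : Measure Ω) [IsProbabilityMeasure μ]
    (π : ℕ → ℝ) (hπ : ∀ n, 1 ≤ n → 0 ≤ π n) (hπsum : ∑' n : ℕ, π (n + 1) ≤ 1)
    (v : ℝ) (hv : 0 < v)
    (S0 : Ω → ℕ) (U : ℕ → Ω → ℕ)
    (hS0m : Measurable S0) (hUm : ∀ s, Measurable (U s))
    (hindep : iIndepFun
      (fun o : Option ℕ => o.elim S0 U) μ)
    (hS0 : ∀ r : ℕ, μ {ω | S0 ω = r}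
        = ENNReal.ofReal (Real.exp (-v) * v ^ r / r.factorial))
    (hU : ∀ s, ∀ n, 1 ≤ n → μ {ω | U s ω = n} = ENNReal.ofReal (π n))
    (X : ℕ → Ω → ℕ)
    (hX : ∀ n ω, X n ω = ((Finset.range (S0 ω)).filter (fun s => U s ω = n)).card)
    (T : Ω → ℕ) (hT : ∀ ω, T ω = sInf {n | 1 ≤ n ∧ X n ω = 0})
    (hTfin : ∀ᵐ ω ∂μ, ∃ n, 1 ≤ n ∧ X n ω = 0)
    (M : Ω → ℕ)
    (hM : ∀ ω, M ω = ∑ s ∈ Finset.range (S0 ω),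
        (if 1 ≤ U s ω ∧ U s ω < T ω then U s ω else T ω))
    (H : ℕ → ℝ)
    (hH : ∀ k, H k = (∑ n ∈ Finset.Icc 1 k, (n : ℝ) * π n)
        + (k : ℝ) * (1 - ∑ n ∈ Finset.Icc 1 k, π n)) :
    ∫⁻ ω, (M ω : ℝ≥0∞) ∂μ
      = ENNReal.ofReal v * ∫⁻ ω, ENNReal.ofReal (H (T ω)) ∂μ :=
  expected_total_marketing_effort_general μ π hπ v hv S0 U hS0m hUm hindep hS0 hU X hX T hT M hM H
    hH
end

section
/- In the repeated solicitation model with Poisson(v) prior, Var(Y) = v·E[J(T)] + v²·Var(R(T)), where J(k) = Σ_{n=1}^k π_n (1 - π_n v (1 - λ_n)/λ_n) and R(k) = Σ_{n=1}^{k-1} π_n/λ_n (with R(1) = 0). -/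
/-!
Write `ξ t = X (t + 1)`. Then `Y = ∑ᵢ ξ i · 1{i + 1 < T}`, and `{k < T}` is the event that
`ξ 0, …, ξ (k - 1)` are all nonzero, so every term of `Y` and of `Y²` is a product of functions of
distinct independent coordinates. Its expectation therefore factorises into Poisson moments
restricted to `{ξ ≠ 0}`: with `a = π v`, `λ = 1 - e^{-a}`, these are `λ`, `a` and `a + a²` for
the powers `0`, `1`, `2`. Comparing the resulting series term by term gives `E Y = v E R(T)` and
`E Y² = v E J(T) + v² E R(T)²`; the diagonal terms contribute `J` through the identity
`a + a² = v π (1 - a (1 - λ)/λ) + (a/λ)² λ`. Subtracting `(E Y)² = v² (E R(T))²` gives the claim.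
All expectations are Lebesgue integrals in `ℝ≥0∞`, so no integrability has to be checked.
-/

open MeasureTheory ProbabilityTheory
open scoped ENNReal NNReal

open Finset

namespace RepeatedSolicitation

section Poisson

noncomputable def poissonProb (a : ℝ) (m : ℕ) : ℝ := Real.exp (-a) * a ^ m / m.factorial

noncomputable def posProb (a : ℝ) : ℝ := 1 - Real.exp (-a)

lemma poissonProb_nonneg {a : ℝ} (ha : 0 ≤ a) (m : ℕ) : 0 ≤ poissonProb a m := by
  unfold poissonProb; positivity

lemma posProb_pos {a : ℝ} (ha : 0 < a) : 0 < posProb a :=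
  sub_pos.mpr (Real.exp_lt_one_iff.mpr (neg_neg_of_pos ha))

lemma hasSum_poissonProb (a : ℝ) : HasSum (poissonProb a) 1 := by
  have h := (NormedSpace.expSeries_div_hasSum_exp a).mul_left (Real.exp (-a))
  rw [← Real.exp_eq_exp_ℝ, ← Real.exp_add, neg_add_cancel, Real.exp_zero] at h
  exact h.congr_fun fun m ↦ mul_div_assoc _ _ _

lemma poissonProb_succ_mul (a : ℝ) (m : ℕ) :
    poissonProb a (m + 1) * (m + 1) = a * poissonProb a m := by
  unfold poissonProb
  rw [Nat.factorial_succ]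
  push_cast
  field_simp
  ring

lemma hasSum_poissonProb_succ (a : ℝ) :
    HasSum (fun m ↦ poissonProb a (m + 1)) (posProb a) := by
  simpa [posProb, poissonProb] using (hasSum_nat_add_iff' 1).mpr (hasSum_poissonProb a)

lemma hasSum_succ_mul_poissonProb_succ (a : ℝ) :
    HasSum (fun m : ℕ ↦ ((m : ℝ) + 1) * poissonProb a (m + 1)) a := by
  simpa [mul_comm _ (poissonProb a _), poissonProb_succ_mul] using
    (hasSum_poissonProb a).mul_left a

lemma hasSum_succ_sq_mul_poissonProb_succ (a : ℝ) :
    HasSum (fun m : ℕ ↦ ((m : ℝ) + 1) ^ 2 * poissonProb a (m + 1)) (a + a ^ 2) := by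
  have hmean : HasSum (fun m : ℕ ↦ (m : ℝ) * poissonProb a m) a := by
    refine (hasSum_nat_add_iff' (f := fun m : ℕ ↦ (m : ℝ) * poissonProb a m) 1).mp ?_
    simpa using hasSum_succ_mul_poissonProb_succ a
  rw [show a + a ^ 2 = a * (a + 1) by ring]
  -- `(m + 1)² p(m + 1) = a (m + 1) p(m)` reduces the second moment to the first.
  refine ((hmean.add (hasSum_poissonProb a)).mul_left a).congr_fun fun m ↦ ?_
  rw [sq, mul_assoc, mul_comm _ (poissonProb a _), poissonProb_succ_mul]
  ring

end Poisson

section Products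

lemma prod_boole_add_boole {ι M : Type*} [CommMonoid M] [DecidableEq ι] (g : ι → ℕ → M)
    (hg : ∀ t, g t 0 = 1) {s : Finset ι} {i j : ι} (hi : i ∈ s) (hj : j ∈ s) :
    ∏ t ∈ s, g t ((if i = t then 1 else 0) + if j = t then 1 else 0)
      = if i = j then g i 2 else g i 1 * g j 1 := by
  split_ifs with hij
  · subst hij
    rw [prod_eq_single_of_mem i hi fun t _ hti ↦ by simp [Ne.symm hti, hg]]
    simp
  · rw [prod_eq_mul i j hij (fun t _ ht ↦ by simp [Ne.symm ht.1, Ne.symm ht.2, hg])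
      (absurd hi) (absurd hj)]
    simp [hij, Ne.symm hij]

lemma prod_eq_prod_mul_prod_div_ennreal {ι : Type*} {s : Finset ι} (f g : ι → ℝ≥0∞)
    (hg : ∀ t ∈ s, g t ≠ 0) (hg' : ∀ t ∈ s, g t ≠ ∞) :
    ∏ t ∈ s, f t = (∏ t ∈ s, g t) * ∏ t ∈ s, f t / g t := by
  rw [← prod_mul_distrib]
  exact prod_congr rfl fun t ht ↦ (ENNReal.mul_div_cancel (hg t ht) (hg' t ht)).symm

noncomputable def powOnPos (c m : ℕ) : ℝ≥0∞ := if m = 0 then 0 else (m : ℝ≥0∞) ^ c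

lemma prod_powOnPos {ι : Type*} (s : Finset ι) (c x : ι → ℕ) :
    ∏ t ∈ s, powOnPos (c t) (x t)
      = (∏ t ∈ s, (x t : ℝ≥0∞) ^ c t) * if ∀ t ∈ s, x t ≠ 0 then 1 else 0 := by
  rw [← prod_boole, ← prod_mul_distrib]
  refine prod_congr rfl fun t _ ↦ ?_
  unfold powOnPos
  split_ifs <;> simp_all

end Products

section Series

lemma sum_Ico_one_eq_tsum (f : ℕ → ℝ≥0∞) (K : ℕ) :
    ∑ n ∈ Ico 1 K, f n = ∑' i, f (i + 1) * if i + 1 < K then 1 else 0 := by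
  rw [sum_Ico_eq_sum_range, tsum_eq_sum (s := range (K - 1)) fun i hi ↦ by
    rw [mem_range] at hi; rw [if_neg (by omega), mul_zero]]
  refine sum_congr rfl fun i hi ↦ ?_
  rw [mem_range] at hi
  rw [if_pos (by omega), mul_one, add_comm]

lemma ofReal_sum_Ico_one_eq_tsum {f : ℕ → ℝ} (hf : ∀ i, 0 ≤ f (i + 1)) (K : ℕ) :
    ENNReal.ofReal (∑ n ∈ Ico 1 K, f n)
      = ∑' i, ENNReal.ofReal (f (i + 1)) * if i + 1 < K then 1 else 0 := by
  rw [ENNReal.ofReal_sum_of_nonneg fun n hn ↦ ?_, sum_Ico_one_eq_tsum]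
  obtain ⟨i, rfl⟩ := Nat.exists_eq_add_of_le' (mem_Ico.mp hn).1
  exact hf i

lemma sq_tsum_mul_indicator (f : ℕ → ℝ≥0∞) (K : ℕ) :
    (∑' i, f i * if i + 1 < K then 1 else 0) ^ 2
      = ∑' p : ℕ × ℕ, f p.1 * f p.2 * if max p.1 p.2 + 1 < K then 1 else 0 := by
  rw [sq, ← ENNReal.tsum_mul_right, ENNReal.tsum_prod']
  refine tsum_congr fun i ↦ ?_
  rw [← ENNReal.tsum_mul_left]
  refine tsum_congr fun j ↦ ?_
  have hmax : max i j + 1 < K ↔ i + 1 < K ∧ j + 1 < K := by omega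
  by_cases hi : i + 1 < K <;> by_cases hj : j + 1 < K <;> simp [hmax, hi, hj]

end Series

section PoissonMoments

variable {Ω : Type*} [MeasurableSpace Ω] {μ : Measure Ω} {ξ : Ω → ℕ} {a : ℝ}

lemma lintegral_comp_eq_tsum (hξ : Measurable ξ) (g : ℕ → ℝ≥0∞) :
    ∫⁻ ω, g (ξ ω) ∂μ = ∑' m, g m * μ {ω | ξ ω = m} := by
  rw [← lintegral_map measurable_from_nat hξ, lintegral_countable']
  exact tsum_congr fun m ↦ by rw [Measure.map_apply hξ (measurableSet_singleton m)]; rfl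

lemma lintegral_powOnPos_of_hasSum (hξ : Measurable ξ) (ha : 0 ≤ a)
    (hlaw : ∀ m, μ {ω | ξ ω = m} = ENNReal.ofReal (poissonProb a m)) (c : ℕ) {s : ℝ}
    (hs : HasSum (fun m : ℕ ↦ ((m : ℝ) + 1) ^ c * poissonProb a (m + 1)) s) :
    ∫⁻ ω, powOnPos c (ξ ω) ∂μ = ENNReal.ofReal s := by
  rw [lintegral_comp_eq_tsum hξ, tsum_eq_zero_add' ENNReal.summable, powOnPos, if_pos rfl,
    zero_mul, zero_add, ← hs.tsum_eq,
    ENNReal.ofReal_tsum_of_nonneg (fun m ↦ by positivity [poissonProb_nonneg ha (m + 1)])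
      hs.summable]
  refine tsum_congr fun m ↦ ?_
  rw [hlaw, powOnPos, if_neg m.succ_ne_zero, ENNReal.ofReal_mul (by positivity),
    ENNReal.ofReal_pow (by positivity)]
  norm_cast

end PoissonMoments

noncomputable def survivalProb (a : ℕ → ℝ) (k : ℕ) : ℝ := ∏ t ∈ range k, posProb (a t)

-- With `a = π n v` and `λ n = posProb a`, these are `v π n / λ n` and
-- `v π n (1 - π n v (1 - λ n) / λ n)`, the `n`-th increments of `v R` and `v J`.
noncomputable def rIncrement (a : ℝ) : ℝ := a / posProb a

noncomputable def jIncrement (a : ℝ) : ℝ := a * (1 - a * (1 - posProb a) / posProb a)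

lemma survivalProb_nonneg {a : ℕ → ℝ} (ha : ∀ t, 0 < a t) (k : ℕ) : 0 ≤ survivalProb a k :=
  prod_nonneg fun t _ ↦ (posProb_pos (ha t)).le

lemma rIncrement_nonneg {a : ℝ} (ha : 0 < a) : 0 ≤ rIncrement a :=
  div_nonneg ha.le (posProb_pos ha).le

lemma jIncrement_nonneg {a : ℝ} (ha : 0 < a) : 0 ≤ jIncrement a := by
  refine mul_nonneg ha.le (sub_nonneg.mpr ((div_le_one (posProb_pos ha)).mpr ?_))
  have h := mul_le_mul_of_nonneg_right (Real.add_one_le_exp a) (Real.exp_pos (-a)).le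
  rw [← Real.exp_add, add_neg_cancel, Real.exp_zero] at h
  simp only [posProb, sub_sub_cancel]
  linarith

section Model

variable {Ω : Type*} [MeasurableSpace Ω] {μ : Measure Ω} {ξ : ℕ → Ω → ℕ} {T : Ω → ℕ}
  {a : ℕ → ℝ}

lemma lintegral_prod_pow_mul_indicator (hξ : ∀ t, Measurable (ξ t)) (hind : iIndepFun ξ μ)
    (hT : ∀ᵐ ω ∂μ, ∀ k, k < T ω ↔ ∀ t < k, ξ t ω ≠ 0) (c : ℕ → ℕ) (k : ℕ) :
    ∫⁻ ω, (∏ t ∈ range k, (ξ t ω : ℝ≥0∞) ^ c t) * (if k < T ω then 1 else 0) ∂μ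
      = ∏ t ∈ range k, ∫⁻ ω, powOnPos (c t) (ξ t ω) ∂μ := by
  refine (lintegral_congr_ae (hT.mono fun ω hω ↦ ?_)).trans
    (lintegral_prod_eq_prod_lintegral_of_indepFun (range k) (fun t ω ↦ powOnPos (c t) (ξ t ω))
      (hind.comp (fun t ↦ powOnPos (c t)) fun _ ↦ measurable_from_nat)
      fun t ↦ (measurable_from_nat (f := powOnPos (c t))).comp (hξ t))
  simp only [prod_powOnPos, hω k, mem_range]

/-- `ξ t` is the yield `X (t + 1)` of the `(t + 1)`-st solicitation, Poisson with mean
`a t = π (t + 1) v`, and `T` is the first solicitation that yields nothing. -/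
structure IsSolicitationModel (μ : Measure Ω) (ξ : ℕ → Ω → ℕ) (T : Ω → ℕ) (a : ℕ → ℝ) :
    Prop where
  measurable : ∀ t, Measurable (ξ t)
  indep : iIndepFun ξ μ
  lt_stop_iff : ∀ᵐ ω ∂μ, ∀ k, k < T ω ↔ ∀ t < k, ξ t ω ≠ 0
  measurable_stop : Measurable T
  pos : ∀ t, 0 < a t
  law : ∀ t m, μ {ω | ξ t ω = m} = ENNReal.ofReal (poissonProb (a t) m)

namespace IsSolicitationModel

lemma lintegral_powOnPos_zero (h : IsSolicitationModel μ ξ T a) (t : ℕ) :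
    ∫⁻ ω, powOnPos 0 (ξ t ω) ∂μ = ENNReal.ofReal (posProb (a t)) :=
  lintegral_powOnPos_of_hasSum (h.measurable t) (h.pos t).le (h.law t) 0
    (by simpa using hasSum_poissonProb_succ (a t))

lemma lintegral_powOnPos_one (h : IsSolicitationModel μ ξ T a) (t : ℕ) :
    ∫⁻ ω, powOnPos 1 (ξ t ω) ∂μ = ENNReal.ofReal (a t) :=
  lintegral_powOnPos_of_hasSum (h.measurable t) (h.pos t).le (h.law t) 1
    (by simpa using hasSum_succ_mul_poissonProb_succ (a t))

lemma lintegral_powOnPos_two (h : IsSolicitationModel μ ξ T a) (t : ℕ) :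
    ∫⁻ ω, powOnPos 2 (ξ t ω) ∂μ = ENNReal.ofReal (a t + a t ^ 2) :=
  lintegral_powOnPos_of_hasSum (h.measurable t) (h.pos t).le (h.law t) 2
    (hasSum_succ_sq_mul_poissonProb_succ (a t))

lemma prod_lintegral_powOnPos_zero (h : IsSolicitationModel μ ξ T a) (k : ℕ) :
    ∏ t ∈ range k, ∫⁻ ω, powOnPos 0 (ξ t ω) ∂μ = ENNReal.ofReal (survivalProb a k) := by
  rw [survivalProb, ENNReal.ofReal_prod_of_nonneg fun t _ ↦ (posProb_pos (h.pos t)).le]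
  exact prod_congr rfl fun t _ ↦ h.lintegral_powOnPos_zero t

lemma lintegral_indicator_lt (h : IsSolicitationModel μ ξ T a) (k : ℕ) :
    ∫⁻ ω, (if k < T ω then 1 else 0) ∂μ = ENNReal.ofReal (survivalProb a k) := by
  have key := lintegral_prod_pow_mul_indicator h.measurable h.indep h.lt_stop_iff (fun _ ↦ 0) k
  simp only [pow_zero, prod_const_one, one_mul] at key
  rw [key, h.prod_lintegral_powOnPos_zero]

lemma lintegral_mul_indicator_lt (h : IsSolicitationModel μ ξ T a) (i : ℕ) :
    ∫⁻ ω, (ξ i ω : ℝ≥0∞) * (if i + 1 < T ω then 1 else 0) ∂μ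
      = ENNReal.ofReal (a i * survivalProb a i) := by
  have key := lintegral_prod_pow_mul_indicator h.measurable h.indep h.lt_stop_iff
    (fun t ↦ if i = t then 1 else 0) (i + 1)
  simp only [prod_pow_boole, mem_range, lt_add_one, if_true] at key
  rw [key, prod_range_succ, if_pos rfl, h.lintegral_powOnPos_one,
    ENNReal.ofReal_mul (h.pos i).le, mul_comm, ← h.prod_lintegral_powOnPos_zero]
  refine congrArg _ (prod_congr rfl fun t ht ↦ ?_)
  rw [if_neg (by rw [mem_range] at ht; omega)]

lemma lintegral_mul_mul_indicator_lt (h : IsSolicitationModel μ ξ T a) (i j : ℕ) :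
    ∫⁻ ω, (ξ i ω : ℝ≥0∞) * ξ j ω * (if max i j + 1 < T ω then 1 else 0) ∂μ
      = (if i = j then ENNReal.ofReal (jIncrement (a i) * survivalProb a i) else 0)
        + ENNReal.ofReal (rIncrement (a i)) * ENNReal.ofReal (rIncrement (a j))
          * ENNReal.ofReal (survivalProb a (max i j + 1)) := by
  have hi : i ∈ range (max i j + 1) := mem_range.mpr (by omega)
  have hj : j ∈ range (max i j + 1) := mem_range.mpr (by omega)
  have key := lintegral_prod_pow_mul_indicator h.measurable h.indep h.lt_stop_iff
    (fun t ↦ (if i = t then 1 else 0) + if j = t then 1 else 0) (max i j + 1)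
  have hprod : ∀ ω, ∏ t ∈ range (max i j + 1),
      (ξ t ω : ℝ≥0∞) ^ ((if i = t then 1 else 0) + if j = t then 1 else 0) = ξ i ω * ξ j ω := by
    intro ω
    rw [prod_boole_add_boole (fun t n ↦ (ξ t ω : ℝ≥0∞) ^ n) (fun _ ↦ pow_zero _) hi hj]
    split_ifs with hij
    · rw [hij, sq]
    · simp
  simp only [hprod] at key
  set M : ℕ → ℕ → ℝ≥0∞ := fun t n ↦ ∫⁻ ω, powOnPos n (ξ t ω) ∂μ
  have hM0 : ∀ t, M t 0 = ENNReal.ofReal (posProb (a t)) := h.lintegral_powOnPos_zero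
  have hM0_ne : ∀ t, M t 0 ≠ 0 := fun t ↦ by
    simpa [hM0] using posProb_pos (h.pos t)
  -- Dividing each factor by `M t 0` leaves only the factors at `i` and `j`.
  rw [key, prod_eq_prod_mul_prod_div_ennreal _ (fun t ↦ M t 0) (fun t _ ↦ hM0_ne t)
      (fun t _ ↦ by simp [hM0]),
    prod_boole_add_boole (fun t n ↦ M t n / M t 0) (fun t ↦ ENNReal.div_self (hM0_ne t)
      (by simp [hM0])) hi hj, h.prod_lintegral_powOnPos_zero]
  have hpos := fun t ↦ posProb_pos (h.pos t)
  split_ifs with hij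
  · subst hij
    simp only [M, h.lintegral_powOnPos_two, h.lintegral_powOnPos_zero, max_self,
      ← ENNReal.ofReal_div_of_pos (hpos i)]
    have hr := rIncrement_nonneg (h.pos i)
    rw [← ENNReal.ofReal_mul (survivalProb_nonneg h.pos _), ← ENNReal.ofReal_mul hr,
      ← ENNReal.ofReal_mul (mul_nonneg hr hr),
      ← ENNReal.ofReal_add (mul_nonneg (jIncrement_nonneg (h.pos i)) (survivalProb_nonneg h.pos _))
        (by positivity [survivalProb_nonneg h.pos (i + 1)])]
    congr 1
    have := (hpos i).ne'
    simp only [survivalProb, prod_range_succ, jIncrement, rIncrement]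
    field_simp
    ring
  · simp only [M, h.lintegral_powOnPos_one, h.lintegral_powOnPos_zero,
      ← ENNReal.ofReal_div_of_pos (hpos _), rIncrement, zero_add]
    ring

lemma measurable_indicator_lt (h : IsSolicitationModel μ ξ T a) (k : ℕ) :
    Measurable fun ω ↦ if k < T ω then (1 : ℝ≥0∞) else 0 :=
  Measurable.ite (measurableSet_lt measurable_const h.measurable_stop) measurable_const
    measurable_const

lemma measurable_natCast (h : IsSolicitationModel μ ξ T a) (t : ℕ) :
    Measurable fun ω ↦ (ξ t ω : ℝ≥0∞) :=
  measurable_from_nat.comp (h.measurable t)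

lemma lintegral_tsum_mul_indicator_lt (h : IsSolicitationModel μ ξ T a) {ι : Type*}
    [Countable ι] (f : ι → ℝ≥0∞) (g : ι → ℕ) :
    ∫⁻ ω, ∑' p, f p * (if g p < T ω then 1 else 0) ∂μ
      = ∑' p, f p * ENNReal.ofReal (survivalProb a (g p)) := by
  rw [lintegral_tsum fun p ↦ ((h.measurable_indicator_lt (g p)).const_mul _).aemeasurable]
  refine tsum_congr fun p ↦ ?_
  rw [lintegral_const_mul _ (h.measurable_indicator_lt (g p)), h.lintegral_indicator_lt]

lemma lintegral_yield (h : IsSolicitationModel μ ξ T a) :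
    ∫⁻ ω, ∑' i, (ξ i ω : ℝ≥0∞) * (if i + 1 < T ω then 1 else 0) ∂μ
      = ∫⁻ ω, ∑' i, ENNReal.ofReal (rIncrement (a i)) * (if i + 1 < T ω then 1 else 0) ∂μ := by
  rw [lintegral_tsum (f := fun i ω ↦ (ξ i ω : ℝ≥0∞) * if i + 1 < T ω then 1 else 0)
      fun i ↦ ((h.measurable_natCast i).mul (h.measurable_indicator_lt _)).aemeasurable,
    h.lintegral_tsum_mul_indicator_lt]
  refine tsum_congr fun i ↦ ?_
  have := (posProb_pos (h.pos i)).ne'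
  rw [h.lintegral_mul_indicator_lt, ← ENNReal.ofReal_mul (rIncrement_nonneg (h.pos i))]
  congr 1
  simp only [survivalProb, prod_range_succ, rIncrement]
  field_simp

lemma lintegral_yield_sq (h : IsSolicitationModel μ ξ T a) :
    ∫⁻ ω, (∑' i, (ξ i ω : ℝ≥0∞) * (if i + 1 < T ω then 1 else 0)) ^ 2 ∂μ
      = ∫⁻ ω, ∑' i, ENNReal.ofReal (jIncrement (a i)) * (if i < T ω then 1 else 0) ∂μ
        + ∫⁻ ω, (∑' i, ENNReal.ofReal (rIncrement (a i)) * (if i + 1 < T ω then 1 else 0)) ^ 2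
          ∂μ := by
  simp only [sq_tsum_mul_indicator]
  rw [lintegral_tsum (f := fun (p : ℕ × ℕ) ω ↦
        (ξ p.1 ω : ℝ≥0∞) * ξ p.2 ω * if max p.1 p.2 + 1 < T ω then 1 else 0)
      fun p ↦ (((h.measurable_natCast p.1).mul (h.measurable_natCast p.2)).mul
        (h.measurable_indicator_lt _)).aemeasurable,
    h.lintegral_tsum_mul_indicator_lt, h.lintegral_tsum_mul_indicator_lt]
  simp only [h.lintegral_mul_mul_indicator_lt]
  rw [ENNReal.tsum_add, ENNReal.tsum_prod']
  congr 1
  refine tsum_congr fun i ↦ ?_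
  rw [tsum_eq_single i fun j hj ↦ if_neg (Ne.symm hj), if_pos rfl,
    ENNReal.ofReal_mul (jIncrement_nonneg (h.pos i))]

end IsSolicitationModel

end Model

section Variance

variable {Ω : Type*} [MeasurableSpace Ω] {μ : Measure Ω} [IsProbabilityMeasure μ]

lemma lintegral_enorm_sq_eq_evariance_add {X : Ω → ℝ} (hX : AEStronglyMeasurable X μ) :
    ∫⁻ ω, ‖X ω‖ₑ ^ 2 ∂μ = evariance X μ + ENNReal.ofReal (μ[X] ^ 2) := by
  rw [evariance_def' hX]
  refine (tsub_add_cancel_of_le ?_).symm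
  by_cases hX2 : MemLp X 2 μ
  · have hvar := variance_nonneg X μ
    rw [variance_eq_sub hX2] at hvar
    calc ENNReal.ofReal (μ[X] ^ 2) ≤ ENNReal.ofReal (μ[X ^ 2]) :=
          ENNReal.ofReal_le_ofReal (by linarith)
      _ = ∫⁻ ω, ‖X ω‖ₑ ^ 2 ∂μ := by
        change ENNReal.ofReal (∫ ω, X ω ^ 2 ∂μ) = _
        rw [ofReal_integral_eq_lintegral_ofReal hX2.integrable_sq
          (ae_of_all _ fun ω ↦ sq_nonneg _)]
        refine lintegral_congr fun ω ↦ ?_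
        rw [Real.enorm_eq_ofReal_abs, ← ENNReal.ofReal_pow (abs_nonneg _), sq_abs]
  · have htop := evariance_eq_top hX hX2
    rw [evariance_def' hX, ENNReal.sub_eq_top_iff] at htop
    rw [htop.1]
    exact le_top

lemma evariance_eq_of_lintegral_moments {Y Z : Ω → ℝ} (hY : AEStronglyMeasurable Y μ)
    (hZ : AEStronglyMeasurable Z μ) (hY0 : ∀ ω, 0 ≤ Y ω) (hZ0 : ∀ ω, 0 ≤ Z ω) {c : ℝ}
    (hc : 0 ≤ c) {A : ℝ≥0∞}
    (h1 : ∫⁻ ω, ENNReal.ofReal (Y ω) ∂μ = ENNReal.ofReal c * ∫⁻ ω, ENNReal.ofReal (Z ω) ∂μ)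
    (h2 : ∫⁻ ω, ENNReal.ofReal (Y ω) ^ 2 ∂μ
      = A + ENNReal.ofReal c ^ 2 * ∫⁻ ω, ENNReal.ofReal (Z ω) ^ 2 ∂μ) :
    evariance Y μ = A + ENNReal.ofReal c ^ 2 * evariance Z μ := by
  have hmean : μ[Y] = c * μ[Z] := by
    rw [integral_eq_lintegral_of_nonneg_ae (ae_of_all _ hY0) hY,
      integral_eq_lintegral_of_nonneg_ae (ae_of_all _ hZ0) hZ, h1, ENNReal.toReal_mul,
      ENNReal.toReal_ofReal hc]
  have henorm : ∀ {W : Ω → ℝ}, (∀ ω, 0 ≤ W ω) →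
      ∫⁻ ω, ENNReal.ofReal (W ω) ^ 2 ∂μ = ∫⁻ ω, ‖W ω‖ₑ ^ 2 ∂μ := fun hW ↦
    lintegral_congr fun ω ↦ by rw [Real.enorm_eq_ofReal (hW ω)]
  rw [henorm hY0, henorm hZ0, lintegral_enorm_sq_eq_evariance_add hY,
    lintegral_enorm_sq_eq_evariance_add hZ, hmean] at h2
  rw [← ENNReal.add_left_inj (ENNReal.ofReal_ne_top (r := (c * μ[Z]) ^ 2)), h2, mul_add,
    mul_pow, ENNReal.ofReal_mul (sq_nonneg c), ENNReal.ofReal_pow hc]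
  ring

end Variance

section Stopping

variable {Ω : Type*} [MeasurableSpace Ω]

lemma measurable_sInf_setOf {p : ℕ → Ω → Prop} (hp : ∀ n, MeasurableSet {ω | p n ω}) :
    Measurable fun ω ↦ sInf {n | p n ω} := by
  classical
  refine measurable_to_countable' fun k ↦ ?_
  have hpre : (fun ω ↦ sInf {n | p n ω}) ⁻¹' {k}
      = ({ω | p k ω} ∩ ⋂ j ∈ range k, {ω | p j ω}ᶜ) ∪ ({_ω | k = 0} ∩ ⋂ n, {ω | p n ω}ᶜ) := by
    ext ω
    by_cases hne : ∃ n, p n ω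
    · rw [Set.mem_preimage, Set.mem_singleton_iff, Nat.sInf_def (s := {n | p n ω}) hne,
        Nat.find_eq_iff]
      simp [hne]
    · push Not at hne
      simp [hne, eq_comm]
  rw [hpre]
  exact ((hp k).inter (measurableSet_biInter _ fun j _ ↦ (hp j).compl)).union
    ((MeasurableSet.const _).inter (.iInter fun n ↦ (hp n).compl))

lemma measurable_sum_Ico_stop {X : ℕ → Ω → ℕ} (hX : ∀ n, Measurable (X n)) {T : Ω → ℕ}
    (hT : Measurable T) (m : ℕ) : Measurable fun ω ↦ ∑ n ∈ Ico m (T ω), X n ω :=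
  (measurable_from_prod_countable_left (f := fun p : Ω × ℕ ↦ ∑ n ∈ Ico m p.2, X n p.1)
    fun k ↦ Finset.measurable_sum (Ico m k) fun n _ ↦ hX n).comp (measurable_id.prodMk hT)

lemma lt_sInf_iff_forall_ne_zero {x : ℕ → ℕ} (hx : ∃ n, 1 ≤ n ∧ x n = 0) (k : ℕ) :
    k < sInf {n | 1 ≤ n ∧ x n = 0} ↔ ∀ t < k, x (t + 1) ≠ 0 := by
  refine ⟨fun hk t ht h0 ↦ ?_, fun hk ↦ ?_⟩
  · have : sInf {n | 1 ≤ n ∧ x n = 0} ≤ t + 1 := Nat.sInf_le ⟨t.succ_pos, h0⟩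
    omega
  · by_contra! hle
    obtain ⟨h1, h0⟩ := Nat.sInf_mem (s := {n | 1 ≤ n ∧ x n = 0}) hx
    exact hk (sInf {n | 1 ≤ n ∧ x n = 0} - 1) (by omega) (by rwa [Nat.sub_add_cancel h1])

end Stopping

lemma sum_Ico_div_nonneg {π lam : ℕ → ℝ} {v : ℝ} (hπ : ∀ n, 1 ≤ n → 0 < π n) (hv : 0 < v)
    (hlam : ∀ n, lam n = posProb (π n * v)) (K : ℕ) : 0 ≤ ∑ n ∈ Ico 1 K, π n / lam n :=
  sum_nonneg fun n hn ↦ have hn1 := (mem_Ico.mp hn).1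
    (div_pos (hπ n hn1) (hlam n ▸ posProb_pos (mul_pos (hπ n hn1) hv))).le

lemma ofReal_mul_sum_Ico_eq_tsum_rIncrement {π lam : ℕ → ℝ} {v : ℝ}
    (hπ : ∀ n, 1 ≤ n → 0 < π n) (hv : 0 < v) (hlam : ∀ n, lam n = posProb (π n * v)) (K : ℕ) :
    ENNReal.ofReal v * ENNReal.ofReal (∑ n ∈ Ico 1 K, π n / lam n)
      = ∑' i, ENNReal.ofReal (rIncrement (π (i + 1) * v)) * if i + 1 < K then 1 else 0 := by
  have hr : ∀ i, v * (π (i + 1) / lam (i + 1)) = rIncrement (π (i + 1) * v) := fun i ↦ by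
    rw [hlam, rIncrement]; ring
  rw [← ENNReal.ofReal_mul hv.le, mul_sum,
    ofReal_sum_Ico_one_eq_tsum fun i ↦ hr i ▸ rIncrement_nonneg (mul_pos (hπ _ i.succ_pos) hv)]
  simp only [hr]

lemma ofReal_mul_sum_Icc_eq_tsum_jIncrement {π lam : ℕ → ℝ} {v : ℝ}
    (hπ : ∀ n, 1 ≤ n → 0 < π n) (hv : 0 < v) (hlam : ∀ n, lam n = posProb (π n * v)) (K : ℕ) :
    ENNReal.ofReal v * ENNReal.ofReal (∑ n ∈ Icc 1 K, π n * (1 - π n * v * (1 - lam n) / lam n))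
      = ∑' i, ENNReal.ofReal (jIncrement (π (i + 1) * v)) * if i < K then 1 else 0 := by
  have hj : ∀ i, v * (π (i + 1) * (1 - π (i + 1) * v * (1 - lam (i + 1)) / lam (i + 1)))
      = jIncrement (π (i + 1) * v) := fun i ↦ by
    rw [hlam, jIncrement]; ring
  rw [← ENNReal.ofReal_mul hv.le, ← Ico_add_one_right_eq_Icc, mul_sum,
    ofReal_sum_Ico_one_eq_tsum fun i ↦ hj i ▸ jIncrement_nonneg (mul_pos (hπ _ i.succ_pos) hv)]
  simp only [hj, add_lt_add_iff_right]

end RepeatedSolicitation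

open RepeatedSolicitation

theorem variance_of_total_yield_general
    {Ω : Type*} [MeasurableSpace Ω] (μ : Measure Ω) [IsProbabilityMeasure μ]
    (π : ℕ → ℝ) (hπ : ∀ n, 1 ≤ n → 0 < π n)
    (v : ℝ) (hv : 0 < v)
    (X : ℕ → Ω → ℕ) (hXm : ∀ n, Measurable (X n))
    (hindep : iIndepFun (fun n : ℕ => X (n + 1)) μ)
    (hX : ∀ n, 1 ≤ n → ∀ m : ℕ, μ {ω | X n ω = m}
        = ENNReal.ofReal (Real.exp (-(π n * v)) * (π n * v) ^ m / m.factorial))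
    (T : Ω → ℕ) (hT : ∀ ω, T ω = sInf {n | 1 ≤ n ∧ X n ω = 0})
    (hTfin : ∀ᵐ ω ∂μ, ∃ n, 1 ≤ n ∧ X n ω = 0)
    (Y : Ω → ℕ) (hY : ∀ ω, Y ω = ∑ n ∈ Finset.Ico 1 (T ω), X n ω)
    (lam : ℕ → ℝ) (hlam : ∀ j, lam j = 1 - Real.exp (-(π j * v)))
    (J : ℕ → ℝ)
    (hJ : ∀ k, J k = ∑ n ∈ Finset.Icc 1 k, π n * (1 - π n * v * (1 - lam n) / lam n))
    (R : ℕ → ℝ) (hR : ∀ k, R k = ∑ n ∈ Finset.Ico 1 k, π n / lam n) :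
    evariance (fun ω => (Y ω : ℝ)) μ
      = ENNReal.ofReal v * ∫⁻ ω, ENNReal.ofReal (J (T ω)) ∂μ
        + ENNReal.ofReal v ^ 2 * evariance (fun ω => R (T ω)) μ := by
  have hTm : Measurable T := funext hT ▸ measurable_sInf_setOf fun n ↦
    (MeasurableSet.const _).inter (hXm n (measurableSet_singleton 0))
  have h : IsSolicitationModel μ (fun t ↦ X (t + 1)) T (fun t ↦ π (t + 1) * v) :=
    { measurable := fun t ↦ hXm (t + 1)
      indep := hindep
      lt_stop_iff := hTfin.mono fun ω hω k ↦ hT ω ▸ lt_sInf_iff_forall_ne_zero hω k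
      measurable_stop := hTm
      pos := fun t ↦ mul_pos (hπ _ t.succ_pos) hv
      law := fun t ↦ hX (t + 1) t.succ_pos }
  have hYser : ∀ ω, ENNReal.ofReal (Y ω)
      = ∑' i, (X (i + 1) ω : ℝ≥0∞) * if i + 1 < T ω then 1 else 0 := fun ω ↦ by
    rw [ENNReal.ofReal_natCast, hY, Nat.cast_sum, sum_Ico_one_eq_tsum]
  have hRser := fun ω ↦ hR (T ω) ▸ ofReal_mul_sum_Ico_eq_tsum_rIncrement hπ hv hlam (T ω)
  have hJser := fun ω ↦ hJ (T ω) ▸ ofReal_mul_sum_Icc_eq_tsum_jIncrement hπ hv hlam (T ω)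
  have hJm : Measurable fun ω ↦ ENNReal.ofReal (J (T ω)) :=
    ENNReal.measurable_ofReal.comp (measurable_from_nat.comp hTm)
  have hYm : Measurable fun ω ↦ (Y ω : ℝ) :=
    measurable_from_nat.comp (funext hY ▸ measurable_sum_Ico_stop hXm hTm 1)
  have hRTm : Measurable fun ω ↦ R (T ω) := measurable_from_nat.comp hTm
  have hRm : Measurable fun ω ↦ ENNReal.ofReal (R (T ω)) := ENNReal.measurable_ofReal.comp hRTm
  refine evariance_eq_of_lintegral_moments hYm.aestronglyMeasurable
    hRTm.aestronglyMeasurable (fun ω ↦ Nat.cast_nonneg _)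
    (fun ω ↦ hR (T ω) ▸ sum_Ico_div_nonneg hπ hv hlam (T ω)) hv.le ?_ ?_
  · rw [← lintegral_const_mul _ hRm]
    simp only [hRser, hYser]
    exact h.lintegral_yield
  · rw [← lintegral_const_mul _ hJm, ← lintegral_const_mul _ (hRm.pow_const 2)]
    simp only [← mul_pow, hRser, hJser, hYser]
    exact h.lintegral_yield_sq

/-- **Variance of the total yield.** In the repeated solicitation model with Poisson(v)
prior (`X n` independent `Poisson(π n · v)`, `λ n = 1 - e^{-π n v}`,
`T = min {n ≥ 1 : X n = 0}`, `Y = X 1 + ⋯ + X (T-1)`):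
`Var(Y) = v · E[J(T)] + v² · Var(R(T))`, where
`J k = ∑_{n=1}^k π n (1 - π n v (1 - λ n)/λ n)` and `R k = ∑_{n=1}^{k-1} π n / λ n`. -/
theorem variance_of_total_yield
    {Ω : Type*} [MeasurableSpace Ω] (μ : Measure Ω) [IsProbabilityMeasure μ]
    (π : ℕ → ℝ) (hπ : ∀ n, 1 ≤ n → 0 < π n) (hπsum : ∑' n : ℕ, π (n + 1) ≤ 1)
    (v : ℝ) (hv : 0 < v)
    (X : ℕ → Ω → ℕ) (hXm : ∀ n, Measurable (X n))
    (hindep : iIndepFun (fun n : ℕ => X (n + 1)) μ)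
    (hX : ∀ n, 1 ≤ n → ∀ m : ℕ, μ {ω | X n ω = m}
        = ENNReal.ofReal (Real.exp (-(π n * v)) * (π n * v) ^ m / m.factorial))
    (T : Ω → ℕ) (hT : ∀ ω, T ω = sInf {n | 1 ≤ n ∧ X n ω = 0})
    (hTfin : ∀ᵐ ω ∂μ, ∃ n, 1 ≤ n ∧ X n ω = 0)
    (Y : Ω → ℕ) (hY : ∀ ω, Y ω = ∑ n ∈ Finset.Ico 1 (T ω), X n ω)
    (lam : ℕ → ℝ) (hlam : ∀ j, lam j = 1 - Real.exp (-(π j * v)))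
    (J : ℕ → ℝ)
    (hJ : ∀ k, J k = ∑ n ∈ Finset.Icc 1 k, π n * (1 - π n * v * (1 - lam n) / lam n))
    (R : ℕ → ℝ) (hR : ∀ k, R k = ∑ n ∈ Finset.Ico 1 k, π n / lam n) :
    evariance (fun ω => (Y ω : ℝ)) μ
      = ENNReal.ofReal v * ∫⁻ ω, ENNReal.ofReal (J (T ω)) ∂μ
        + ENNReal.ofReal v ^ 2 * evariance (fun ω => R (T ω)) μ :=
  variance_of_total_yield_general μ π hπ v hv X hXm hindep hX T hT hTfin Y hY lam hlam J hJ R hR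
end

section
/- For any g : Z_+ → [0, ∞), conditional on S_0 = r ≥ 1, E[Σ_{n=1}^{T-1} g(n) X_n | S_0 = r] = r·E[f(T) | S_0 = r - 1], where f(k) = Σ_{n=1}^k g(n) π_n = E[g(U_1) 1{U_1 ≤ k}]. -/
/-!
Writing `X_n = ∑ₛ 1{Uₛ = n}`, the left side is `∑ₛ E[g(Uₛ); 1 ≤ Uₛ < T]`. Since `T` is the first
positive value missed by all clients, for `Uₛ ≥ 1` the event `Uₛ < T` says exactly that the other
`r - 1` clients cover `[1, Uₛ)`, i.e. `Uₛ ≤ Tₛ'` where `Tₛ'` is their first gap. As `Uₛ` is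
independent of the other clients, integrating out `Uₛ` first turns the summand into `E[f(Tₛ')]`,
and `Tₛ'` has the law of `T` for `r - 1` clients because an i.i.d. family is exchangeable.
-/

open MeasureTheory ProbabilityTheory
open scoped ENNReal

namespace ModelReduction

noncomputable def firstGap (S : Set ℕ) : ℕ := sInf {n | 1 ≤ n ∧ n ∉ S}

theorem le_firstGap_iff {S : Set ℕ} (hS : S.Finite) {n : ℕ} :
    n ≤ firstGap S ↔ ∀ k, 1 ≤ k → k < n → k ∈ S := by
  refine ⟨fun h k hk hkn => ?_, fun h => ?_⟩
  · by_contra hkS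
    exact Nat.notMem_of_lt_sInf (lt_of_lt_of_le hkn h) ⟨hk, hkS⟩
  · have hne : {n | 1 ≤ n ∧ n ∉ S}.Nonempty := by
      obtain ⟨m, hm⟩ := (hS.insert 0).exists_notMem
      exact ⟨m, Nat.one_le_iff_ne_zero.2 fun h0 => hm (h0 ▸ Set.mem_insert 0 S),
        fun hmS => hm (Set.mem_insert_of_mem 0 hmS)⟩
    by_contra! hlt
    obtain ⟨h1, hnotS⟩ := Nat.sInf_mem hne
    exact hnotS (h _ h1 hlt)

theorem lt_firstGap_insert_iff {S : Set ℕ} (hS : S.Finite) {a : ℕ} (ha : 1 ≤ a) :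
    a < firstGap (insert a S) ↔ a ≤ firstGap S := by
  rw [Nat.lt_iff_add_one_le, le_firstGap_iff (hS.insert a), le_firstGap_iff hS]
  refine ⟨fun h k hk hka => (h k hk (by omega)).resolve_left (by omega), fun h k hk hka => ?_⟩
  rcases Nat.lt_succ_iff_lt_or_eq.1 hka with hlt | rfl
  · exact Set.mem_insert_of_mem a (h k hk hlt)
  · exact Set.mem_insert k S

theorem sum_Ico_firstGap_mul_card_eq {ι : Type*} [DecidableEq ι] (A : Finset ι) (u : ι → ℕ)
    (h : ℕ → ℝ≥0∞) :
    ∑ n ∈ Finset.Ico 1 (firstGap (u '' A)), h n * ((A.filter (u · = n)).card : ℝ≥0∞)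
      = ∑ s ∈ A, (Finset.Icc 1 (firstGap (u '' (A.erase s))) : Set ℕ).indicator h (u s) := by
  calc _ = ∑ n ∈ Finset.Ico 1 (firstGap (u '' A)), ∑ s ∈ A, if u s = n then h n else 0 := by
        simp only [Finset.natCast_card_filter, Finset.mul_sum, mul_ite, mul_one, mul_zero]
    _ = ∑ s ∈ A, if u s ∈ Finset.Ico 1 (firstGap (u '' A)) then h (u s) else 0 := by
        rw [Finset.sum_comm]
        exact Finset.sum_congr rfl fun s _ => Finset.sum_ite_eq _ _ _
    _ = _ := by
        refine Finset.sum_congr rfl fun s hs => ?_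
        have hinsert : u '' A = insert (u s) (u '' (A.erase s)) := by
          rw [← Set.image_insert_eq, ← Finset.coe_insert, Finset.insert_erase hs]
        have hmem : u s ∈ Finset.Ico 1 (firstGap (u '' A))
            ↔ u s ∈ Finset.Icc 1 (firstGap (u '' (A.erase s))) := by
          rw [Finset.mem_Ico, Finset.mem_Icc, hinsert]
          exact and_congr_right (lt_firstGap_insert_iff ((A.erase s).finite_toSet.image u))
        rw [Set.indicator_apply]
        exact if_congr hmem rfl rfl

theorem lintegral_indicator_Icc_eq_ofReal_sum {ν : Measure ℕ} {π g : ℕ → ℝ}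
    (hπ : ∀ n, 1 ≤ n → 0 ≤ π n) (hg : ∀ n, 0 ≤ g n) (hν : ∀ n, 1 ≤ n → ν {n} = ENNReal.ofReal (π n))
    (k : ℕ) :
    ∫⁻ a, (Finset.Icc 1 k : Set ℕ).indicator (fun n => ENNReal.ofReal (g n)) a ∂ν
      = ENNReal.ofReal (∑ n ∈ Finset.Icc 1 k, g n * π n) := by
  rw [lintegral_indicator (Finset.measurableSet _), lintegral_finset,
    ENNReal.ofReal_sum_of_nonneg fun n hn => mul_nonneg (hg n) (hπ n (Finset.mem_Icc.1 hn).1)]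
  refine Finset.sum_congr rfl fun n hn => ?_
  rw [ENNReal.ofReal_mul (hg n), hν n (Finset.mem_Icc.1 hn).1]

section Independence

variable {Ω ι α : Type*} [MeasurableSpace Ω] {μ : Measure Ω}
  [MeasurableSpace α] [Countable α] [MeasurableSingletonClass α] {U : ι → Ω → α}

theorem measure_eq_of_singleton_eq_of_ne {ν₁ ν₂ : Measure α} [IsProbabilityMeasure ν₁]
    [IsProbabilityMeasure ν₂] (a : α) (h : ∀ b, b ≠ a → ν₁ {b} = ν₂ {b}) : ν₁ = ν₂ := by
  have hcompl : ν₁ {a}ᶜ = ν₂ {a}ᶜ := by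
    have hrestrict : ν₁.restrict {a}ᶜ = ν₂.restrict {a}ᶜ := by
      refine Measure.ext_iff_singleton.2 fun b => ?_
      rw [Measure.restrict_apply (measurableSet_singleton b),
        Measure.restrict_apply (measurableSet_singleton b)]
      by_cases hb : b = a
      · simp [hb]
      · rw [Set.inter_eq_left.2 (Set.singleton_subset_iff.2 hb), h b hb]
    rw [← Measure.restrict_apply_univ, hrestrict, Measure.restrict_apply_univ]
  refine Measure.ext_iff_singleton.2 fun b => ?_
  by_cases hb : b = a
  · subst hb
    rw [← compl_compl ({b} : Set α), prob_compl_eq_one_sub (measurableSet_singleton b).compl,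
      prob_compl_eq_one_sub (measurableSet_singleton b).compl, hcompl]
  · exact h b hb

theorem map_eq_map_of_measure_eq_of_ne [IsProbabilityMeasure μ] {Y Z : Ω → α} (hY : Measurable Y)
    (hZ : Measurable Z) (a : α) (h : ∀ b, b ≠ a → μ {ω | Y ω = b} = μ {ω | Z ω = b}) :
    μ.map Y = μ.map Z := by
  have := Measure.isProbabilityMeasure_map (μ := μ) hY.aemeasurable
  have := Measure.isProbabilityMeasure_map (μ := μ) hZ.aemeasurable
  refine measure_eq_of_singleton_eq_of_ne a fun b hb => ?_
  rw [Measure.map_apply hY (measurableSet_singleton b),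
    Measure.map_apply hZ (measurableSet_singleton b)]
  exact h b hb

theorem measurable_comp_image {β : Type*} [MeasurableSpace β] (hUm : ∀ i, Measurable (U i))
    (s : ι) (B : Finset ι) (F : α → Set α → β) :
    Measurable fun ω => F (U s ω) ((U · ω) '' B) := by
  have hV : Measurable fun ω (i : B) => U i ω := measurable_pi_lambda _ fun i => hUm i
  simp only [Set.image_eq_range]
  exact (measurable_of_countable fun p : α × (B → α) => F p.1 (Set.range p.2)).comp
    ((hUm s).prodMk hV)

theorem lintegral_comp_image_eq_lintegral_lintegral_map (hUm : ∀ i, Measurable (U i))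
    (hindep : iIndepFun U μ) {s : ι} {B : Finset ι} (hs : s ∉ B) (F : α → Set α → ℝ≥0∞) :
    ∫⁻ ω, F (U s ω) ((U · ω) '' B) ∂μ
      = ∫⁻ ω, ∫⁻ a, F a ((U · ω) '' B) ∂(μ.map (U s)) ∂μ := by
  have := hindep.isProbabilityMeasure
  set V : Ω → B → α := fun ω i => U i ω
  have hV : Measurable V := measurable_pi_lambda _ fun i => hUm i
  have hindepV : IndepFun (U s) V μ :=
    (hindep.indepFun_finset {s} B (Finset.disjoint_singleton_left.2 hs) hUm).comp
      (measurable_pi_apply (⟨s, Finset.mem_singleton_self s⟩ : ({s} : Finset ι)))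
      measurable_id
  have hlaw := (indepFun_iff_map_prod_eq_prod_map_map (hUm s).aemeasurable
    hV.aemeasurable).1 hindepV
  have himage : ∀ ω, (U · ω) '' B = Set.range (V ω) := fun ω => Set.image_eq_range _ _
  have := Measure.isProbabilityMeasure_map (μ := μ) (hUm s).aemeasurable
  have := Measure.isProbabilityMeasure_map (μ := μ) hV.aemeasurable
  simp only [himage]
  calc ∫⁻ ω, F (U s ω) (Set.range (V ω)) ∂μ
      = ∫⁻ p, F p.1 (Set.range p.2) ∂(μ.map (U s)).prod (μ.map V) := by
        rw [← hlaw, lintegral_map (measurable_of_countable _) ((hUm s).prodMk hV)]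
    _ = ∫⁻ v, ∫⁻ a, F a (Set.range v) ∂(μ.map (U s)) ∂(μ.map V) :=
        lintegral_prod_symm _ (measurable_of_countable _).aemeasurable
    _ = _ := lintegral_map (measurable_of_countable _) hV

theorem lintegral_comp_image_eq_lintegral_pi (hUm : ∀ i, Measurable (U i))
    (hindep : iIndepFun U μ) (A : Finset ι) (G : Set α → ℝ≥0∞) :
    ∫⁻ ω, G ((U · ω) '' A) ∂μ
      = ∫⁻ v, G (Set.range v) ∂(Measure.pi fun i : A => μ.map (U i)) := by
  have hV : Measurable fun ω (i : A) => U i ω := measurable_pi_lambda _ fun i => hUm i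
  have hindepA : iIndepFun (fun i : A => U i) μ := hindep.precomp Subtype.val_injective
  rw [← hindepA.map_fun_eq_pi_map fun i : A => (hUm i).aemeasurable,
    lintegral_map (measurable_of_countable _) hV]
  simp only [Set.image_eq_range]
  rfl

theorem lintegral_comp_image_eq_of_card_eq (hUm : ∀ i, Measurable (U i))
    (hindep : iIndepFun U μ) (hident : ∀ i j, μ.map (U i) = μ.map (U j)) {A B : Finset ι}
    (hAB : A.card = B.card) (G : Set α → ℝ≥0∞) :
    ∫⁻ ω, G ((U · ω) '' A) ∂μ = ∫⁻ ω, G ((U · ω) '' B) ∂μ := by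
  have := hindep.isProbabilityMeasure
  let e : A ≃ B := Fintype.equivOfCardEq (by simpa using hAB)
  have hpres := measurePreserving_arrowCongr' (fun i : A => μ.map (U i))
    (fun i : B => μ.map (U i)) e (MeasurableEquiv.refl α)
    fun i => by rw [hident i (e i)]; exact MeasurePreserving.id _
  rw [lintegral_comp_image_eq_lintegral_pi hUm hindep,
    lintegral_comp_image_eq_lintegral_pi hUm hindep,
    ← hpres.lintegral_comp_emb (MeasurableEquiv.measurableEmbedding _)]
  congr with v
  exact congrArg G (EquivLike.range_comp v e.symm).symm

end Independence

end ModelReduction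

open ModelReduction in
theorem model_reduction_lemma_general
    {Ω : Type*} [MeasurableSpace Ω] (μ : Measure Ω) [IsProbabilityMeasure μ]
    (π : ℕ → ℝ) (hπ : ∀ n, 1 ≤ n → 0 ≤ π n)
    (U : ℕ → Ω → ℕ) (hUm : ∀ s, Measurable (U s))
    (hindep : iIndepFun U μ)
    (hU : ∀ s, ∀ n, 1 ≤ n → μ {ω | U s ω = n} = ENNReal.ofReal (π n))
    (X : ℕ → ℕ → Ω → ℕ)
    (hX : ∀ m n ω, X m n ω = ((Finset.range m).filter (fun s => U s ω = n)).card)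
    (T : ℕ → Ω → ℕ) (hT : ∀ m ω, T m ω = sInf {n | 1 ≤ n ∧ X m n ω = 0})
    (g : ℕ → ℝ) (hg : ∀ n, 0 ≤ g n)
    (f : ℕ → ℝ) (hf : ∀ k, f k = ∑ n ∈ Finset.Icc 1 k, g n * π n)
    (r : ℕ) :
    ∫⁻ ω, ∑ n ∈ Finset.Ico 1 (T r ω), ENNReal.ofReal (g n) * (X r n ω : ℝ≥0∞) ∂μ
      = r * ∫⁻ ω, ENNReal.ofReal (f (T (r - 1) ω)) ∂μ := by
  classical
  have hTeq : ∀ m ω, T m ω = firstGap ((U · ω) '' Finset.range m) := fun m ω => by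
    simp [hT, hX, firstGap, Finset.filter_eq_empty_iff]
  have hident : ∀ i j, μ.map (U i) = μ.map (U j) := fun i j =>
    map_eq_map_of_measure_eq_of_ne (hUm i) (hUm j) 0 fun b hb =>
      (hU i b (Nat.one_le_iff_ne_zero.2 hb)).trans (hU j b (Nat.one_le_iff_ne_zero.2 hb)).symm
  -- `F a S`: what a client at `a` contributes when the other clients occupy `S`
  set F : ℕ → Set ℕ → ℝ≥0∞ := fun a S =>
    (Finset.Icc 1 (firstGap S) : Set ℕ).indicator (fun n => ENNReal.ofReal (g n)) a
  have hlaw : ∀ s S, ∫⁻ a, F a S ∂(μ.map (U s)) = ENNReal.ofReal (f (firstGap S)) := fun s S => by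
    rw [hf, lintegral_indicator_Icc_eq_ofReal_sum hπ hg fun n hn => by
      rw [Measure.map_apply (hUm s) (measurableSet_singleton n)]; exact hU s n hn]
  calc ∫⁻ ω, ∑ n ∈ Finset.Ico 1 (T r ω), ENNReal.ofReal (g n) * (X r n ω : ℝ≥0∞) ∂μ
      = ∫⁻ ω, ∑ s ∈ Finset.range r, F (U s ω) ((U · ω) '' (Finset.range r).erase s) ∂μ :=
        lintegral_congr fun ω => by
          simp only [hTeq, hX, sum_Ico_firstGap_mul_card_eq, F]
    _ = ∑ s ∈ Finset.range r,
          ∫⁻ ω, ENNReal.ofReal (f (firstGap ((U · ω) '' (Finset.range r).erase s))) ∂μ := by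
        rw [lintegral_finsetSum _ fun s _ => measurable_comp_image hUm s _ F]
        refine Finset.sum_congr rfl fun s _ => ?_
        rw [lintegral_comp_image_eq_lintegral_lintegral_map hUm hindep (Finset.notMem_erase s _)]
        exact lintegral_congr fun ω => hlaw s _
    _ = ∑ s ∈ Finset.range r, ∫⁻ ω, ENNReal.ofReal (f (T (r - 1) ω)) ∂μ := by
        refine Finset.sum_congr rfl fun s hs => ?_
        rw [lintegral_comp_image_eq_of_card_eq hUm hindep hident
          (B := Finset.range (r - 1)) (by simp [Finset.card_erase_of_mem hs])
          fun S => ENNReal.ofReal (f (firstGap S))]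
        simp only [hTeq]
    _ = _ := by rw [Finset.sum_const, Finset.card_range, nsmul_eq_mul]

/-- **Model-reduction lemma.** Clients' response times `U 0, U 1, …` (value `0` encoding
"never responds") are i.i.d. with `P(U s = n) = π n` for `n ≥ 1`.  For `m` clients put
`X m n = #{s < m : U s = n}` and `T m = min {n ≥ 1 : X m n = 0}`.  For any
`g : ℤ₊ → [0,∞)` and `r ≥ 1`,
`E[∑_{n=1}^{T-1} g(n) X n | S₀ = r] = r · E[f(T) | S₀ = r - 1]`,
where `f k = ∑_{n=1}^k g(n) π n` (both sides may be infinite). -/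
theorem model_reduction_lemma
    {Ω : Type*} [MeasurableSpace Ω] (μ : Measure Ω) [IsProbabilityMeasure μ]
    (π : ℕ → ℝ) (hπ : ∀ n, 1 ≤ n → 0 ≤ π n)
    (U : ℕ → Ω → ℕ) (hUm : ∀ s, Measurable (U s))
    (hindep : iIndepFun U μ)
    (hU : ∀ s, ∀ n, 1 ≤ n → μ {ω | U s ω = n} = ENNReal.ofReal (π n))
    (X : ℕ → ℕ → Ω → ℕ)
    (hX : ∀ m n ω, X m n ω = ((Finset.range m).filter (fun s => U s ω = n)).card)
    (T : ℕ → Ω → ℕ) (hT : ∀ m ω, T m ω = sInf {n | 1 ≤ n ∧ X m n ω = 0})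
    (g : ℕ → ℝ) (hg : ∀ n, 0 ≤ g n)
    (f : ℕ → ℝ) (hf : ∀ k, f k = ∑ n ∈ Finset.Icc 1 k, g n * π n)
    (r : ℕ) (hr : 1 ≤ r) :
    ∫⁻ ω, ∑ n ∈ Finset.Ico 1 (T r ω), ENNReal.ofReal (g n) * (X r n ω : ℝ≥0∞) ∂μ
      = r * ∫⁻ ω, ENNReal.ofReal (f (T (r - 1) ω)) ∂μ :=
  model_reduction_lemma_general μ π hπ U hUm hindep hU X hX T hT g hg f hf r
end

section
/- Conditional on S_0 = r and with response-time hazard parameters p_n, the conditional expectations φ_r^{(n)}(f) = E[f(T^{(n)}) | S_n = r] satisfy the recursion φ_0^{(n)}(f) = f(n+1) and φ_r^{(n)}(f) = f(n+1) q_n^r + Σ_{k=0}^{r-1} C(r,k) p_n^{r-k} q_n^k φ_k^{(n+1)}(f) for r ≥ 1. -/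
open MeasureTheory ProbabilityTheory
open scoped ENNReal NNReal

lemma sInf_nat_eq_iff' {Q : ℕ → Prop} {t : ℕ} :
    sInf {k | Q k} = t ↔ (Q t ∧ ∀ j < t, ¬ Q j) ∨ (t = 0 ∧ ∀ k, ¬ Q k) := by
  constructor
  · intro h
    by_cases hne : {k | Q k}.Nonempty
    · left
      have hmem := Nat.sInf_mem hne
      rw [h] at hmem
      exact ⟨hmem, fun j hj hQj => Nat.notMem_of_lt_sInf (h ▸ hj) hQj⟩
    · right
      rw [Set.not_nonempty_iff_eq_empty] at hne
      rw [hne, Nat.sInf_empty] at h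
      exact ⟨h.symm, fun k hk => (Set.eq_empty_iff_forall_notMem.mp hne k) hk⟩
  · rintro (⟨ht, hlt⟩ | ⟨ht, hall⟩)
    · refine le_antisymm (Nat.sInf_le ht) ?_
      by_contra hc
      push_neg at hc
      exact hlt _ hc (Nat.sInf_mem ⟨t, ht⟩)
    · have : {k | Q k} = ∅ := Set.eq_empty_iff_forall_notMem.mpr hall
      rw [this, Nat.sInf_empty, ht]

lemma measurable_sInf_nat' {α : Type*} [MeasurableSpace α] (Q : ℕ → α → Prop)
    (hQ : ∀ k, MeasurableSet {x | Q k x}) :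
    Measurable (fun x => sInf {k | Q k x}) := by
  apply measurable_to_countable'
  intro t
  have heq : (fun x => sInf {k | Q k x}) ⁻¹' {t}
      = ({x | Q t x} ∩ ⋂ j ∈ Finset.range t, {x | Q j x}ᶜ)
        ∪ (if t = 0 then ⋂ k, {x | Q k x}ᶜ else ∅) := by
    ext x
    simp only [Set.mem_preimage, Set.mem_singleton_iff, Set.mem_union, Set.mem_inter_iff,
      Set.mem_iInter, Set.mem_compl_iff, Set.mem_setOf_eq, Finset.mem_range]
    rw [sInf_nat_eq_iff']
    by_cases ht : t = 0 <;> simp [ht]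
  rw [heq]
  refine ((hQ t).inter (MeasurableSet.biInter (Finset.range t).countable_toSet
    fun j _ => (hQ j).compl)).union ?_
  split
  · exact MeasurableSet.iInter fun k => (hQ k).compl
  · exact MeasurableSet.empty

/-- **Recursion for the conditional expectations `φ_r⁽ⁿ⁾(f)`.**
`{S n}` is a Markov chain in which, given `S n = r`, the number of responses
`X (n+1) = S n - S (n+1)` is `Binomial(r, p n)` (so
`P(S (n+1) = k | S n = r) = C(r,k) p n^{r-k} q n^k`, `q n = 1 - p n`), and the future
`σ(S (n+1), S (n+2), …)` is conditionally independent of `{S n = r}` given `S (n+1)`.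
With `T⁽ⁿ⁾ = min {k > n : X k = 0}` and `φ n r = E[f(T⁽ⁿ⁾) | S n = r]`, one has
`φ n 0 = f (n+1)` and, for `r ≥ 1`,
`φ n r = f (n+1) q n^r + ∑_{k=0}^{r-1} C(r,k) p n^{r-k} q n^k φ (n+1) k`. -/
theorem phi_recursion
    {Ω : Type*} [MeasurableSpace Ω] (μ : Measure Ω) [IsProbabilityMeasure μ]
    (S : ℕ → Ω → ℕ) (hSm : ∀ n, Measurable (S n))
    (p : ℕ → ℝ) (hp : ∀ n, 0 < p n ∧ p n < 1)
    (htrans : ∀ n r k : ℕ,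
      μ ({ω | S (n + 1) ω = k} ∩ {ω | S n ω = r})
        = μ {ω | S n ω = r}
          * ENNReal.ofReal ((r.choose k) * p n ^ (r - k) * (1 - p n) ^ k))
    (hMarkov : ∀ (n r k : ℕ) (A : Set Ω),
      MeasurableSet[MeasurableSpace.comap (fun ω (j : ℕ) => S (n + 1 + j) ω)
        MeasurableSpace.pi] A →
      μ (A ∩ ({ω | S n ω = r} ∩ {ω | S (n + 1) ω = k})) * μ {ω | S (n + 1) ω = k}
        = μ (A ∩ {ω | S (n + 1) ω = k}) * μ ({ω | S n ω = r} ∩ {ω | S (n + 1) ω = k}))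
    (f : ℕ → ℝ) (hf : ∀ k, 0 ≤ f k)
    (Tn : ℕ → Ω → ℕ) (hTn : ∀ n ω, Tn n ω = sInf {k | n < k ∧ S k ω = S (k - 1) ω})
    (φ : ℕ → ℕ → ℝ≥0∞)
    (hφ : ∀ n r, φ n r = ∫⁻ ω, ENNReal.ofReal (f (Tn n ω)) ∂(μ[|{ω | S n ω = r}])) :
    ∀ n r : ℕ, μ {ω | S n ω = r} ≠ 0 →
      (r = 0 → φ n 0 = ENNReal.ofReal (f (n + 1))) ∧
      (1 ≤ r → φ n r
          = ENNReal.ofReal (f (n + 1) * (1 - p n) ^ r)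
            + ∑ k ∈ Finset.range r,
                ENNReal.ofReal ((r.choose k) * p n ^ (r - k) * (1 - p n) ^ k)
                  * φ (n + 1) k) := by
  -- basic measurability facts
  have hSeq : ∀ m k : ℕ, MeasurableSet {ω | S m ω = k} := fun m k =>
    hSm m (measurableSet_singleton k)
  have hTmeas : ∀ m, Measurable (Tn m) := by
    intro m
    have h : Tn m = fun ω => sInf {k | m < k ∧ S k ω = S (k - 1) ω} := funext (hTn m)
    rw [h]
    refine measurable_sInf_nat' _ (fun k => ?_)
    by_cases hmk : m < k
    · have : {ω | m < k ∧ S k ω = S (k - 1) ω} = {ω | S k ω = S (k - 1) ω} := by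
        ext ω; simp [hmk]
      rw [this]
      exact measurableSet_eq_fun (hSm k) (hSm (k - 1))
    · have : {ω | m < k ∧ S k ω = S (k - 1) ω} = ∅ := by
        ext ω; simp [hmk]
      rw [this]
      exact MeasurableSet.empty
  have hTset : ∀ m t : ℕ, MeasurableSet {ω | Tn m ω = t} := fun m t =>
    hTmeas m (measurableSet_singleton t)
  -- the level sets of `Tn (m+1)` are measurable for the tail σ-algebra
  have hTcomap : ∀ m t : ℕ, MeasurableSet[MeasurableSpace.comap
      (fun ω (j : ℕ) => S (m + 1 + j) ω) MeasurableSpace.pi] {ω | Tn (m + 1) ω = t} := by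
    intro m t
    classical
    set F : (ℕ → ℕ) → ℕ :=
      fun x => sInf {k | m + 1 < k ∧ x (k - (m + 1)) = x (k - 1 - (m + 1))} with hF
    have hFmeas : Measurable F := by
      refine measurable_sInf_nat' _ (fun k => ?_)
      by_cases hmk : m + 1 < k
      · have : {x : ℕ → ℕ | m + 1 < k ∧ x (k - (m + 1)) = x (k - 1 - (m + 1))}
            = {x : ℕ → ℕ | x (k - (m + 1)) = x (k - 1 - (m + 1))} := by
          ext x; simp [hmk]
        rw [this]
        exact measurableSet_eq_fun (measurable_pi_apply _) (measurable_pi_apply _)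
      · have : {x : ℕ → ℕ | m + 1 < k ∧ x (k - (m + 1)) = x (k - 1 - (m + 1))} = ∅ := by
          ext x; simp [hmk]
        rw [this]
        exact MeasurableSet.empty
    refine ⟨F ⁻¹' {t}, hFmeas (measurableSet_singleton t), ?_⟩
    ext ω
    simp only [Set.mem_preimage, Set.mem_singleton_iff, Set.mem_setOf_eq]
    have hkey : F (fun j => S (m + 1 + j) ω) = Tn (m + 1) ω := by
      rw [hTn]
      show sInf {k | m + 1 < k ∧ S (m + 1 + (k - (m + 1))) ω = S (m + 1 + (k - 1 - (m + 1))) ω}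
          = sInf {k | m + 1 < k ∧ S k ω = S (k - 1) ω}
      refine congrArg sInf ?_
      ext k
      simp only [Set.mem_setOf_eq]
      constructor
      · rintro ⟨hk, he⟩
        refine ⟨hk, ?_⟩
        have h1 : m + 1 + (k - (m + 1)) = k := by omega
        have h2 : m + 1 + (k - 1 - (m + 1)) = k - 1 := by omega
        rw [h1, h2] at he
        exact he
      · rintro ⟨hk, he⟩
        refine ⟨hk, ?_⟩
        have h1 : m + 1 + (k - (m + 1)) = k := by omega
        have h2 : m + 1 + (k - 1 - (m + 1)) = k - 1 := by omega
        rw [h1, h2]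
        exact he
    rw [hkey]
  -- integral of f(Tn m) over a set, as a sum over the values of Tn m
  have hint : ∀ (m : ℕ) (E : Set Ω), MeasurableSet E →
      ∫⁻ ω in E, ENNReal.ofReal (f (Tn m ω)) ∂μ
        = ∑' t : ℕ, ENNReal.ofReal (f t) * μ ({ω | Tn m ω = t} ∩ E) := by
    intro m E hE
    have hcover : E = ⋃ t : ℕ, ({ω | Tn m ω = t} ∩ E) := by
      ext ω; simp
    have hdisj : Pairwise (Function.onFun Disjoint fun t => {ω | Tn m ω = t} ∩ E) := by
      intro a b hab
      refine Set.disjoint_left.2 ?_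
      rintro ω ⟨ha, -⟩ ⟨hb, -⟩
      exact hab ((ha : Tn m ω = a).symm.trans (hb : Tn m ω = b))
    calc ∫⁻ ω in E, ENNReal.ofReal (f (Tn m ω)) ∂μ
        = ∫⁻ ω in ⋃ t : ℕ, ({ω | Tn m ω = t} ∩ E), ENNReal.ofReal (f (Tn m ω)) ∂μ := by
          rw [← hcover]
      _ = ∑' t : ℕ, ∫⁻ ω in {ω | Tn m ω = t} ∩ E, ENNReal.ofReal (f (Tn m ω)) ∂μ :=
          lintegral_iUnion (fun t => (hTset m t).inter hE) hdisj _
      _ = ∑' t : ℕ, ENNReal.ofReal (f t) * μ ({ω | Tn m ω = t} ∩ E) := by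
          refine tsum_congr fun t => ?_
          have hc : ∫⁻ ω in {ω | Tn m ω = t} ∩ E, ENNReal.ofReal (f (Tn m ω)) ∂μ
              = ∫⁻ _ in {ω | Tn m ω = t} ∩ E, ENNReal.ofReal (f t) ∂μ := by
            refine setLIntegral_congr_fun ((hTset m t).inter hE) ?_
            rintro ω ⟨h1, -⟩
            beta_reduce; rw [(h1 : Tn m ω = t)]
          rw [hc, setLIntegral_const]
  -- unfolded formula for φ
  have hφ' : ∀ m k : ℕ, φ m k = (μ {ω | S m ω = k})⁻¹
      * ∫⁻ ω in {ω | S m ω = k}, ENNReal.ofReal (f (Tn m ω)) ∂μ := by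
    intro m k
    rw [hφ, ProbabilityTheory.cond, lintegral_smul_measure, smul_eq_mul]
  intro n r hA0
  have hAm : MeasurableSet {ω | S n ω = r} := hSeq n r
  have hAtop : μ {ω | S n ω = r} ≠ ⊤ := measure_ne_top μ _
  -- value of Tn n when there is no response / a response at time n+1
  have hTeq1 : ∀ ω, S (n + 1) ω = S n ω → Tn n ω = n + 1 := by
    intro ω hω
    rw [hTn]
    have h1 : n + 1 ∈ {k | n < k ∧ S k ω = S (k - 1) ω} :=
      ⟨Nat.lt_succ_self n, by simpa using hω⟩
    have h2 := Nat.sInf_mem ⟨n + 1, h1⟩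
    exact le_antisymm (Nat.sInf_le h1) h2.1
  have hTeq2 : ∀ ω, S (n + 1) ω ≠ S n ω → Tn n ω = Tn (n + 1) ω := by
    intro ω hω
    rw [hTn, hTn]
    congr 1
    ext k
    simp only [Set.mem_setOf_eq]
    constructor
    · rintro ⟨hk, he⟩
      refine ⟨?_, he⟩
      rcases Nat.lt_or_ge (n + 1) k with h | h
      · exact h
      · exfalso
        have hk1 : k = n + 1 := by omega
        subst hk1
        simp only [Nat.add_sub_cancel] at he
        exact hω he
    · rintro ⟨hk, he⟩
      exact ⟨by omega, he⟩
  -- transition probabilities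
  have hAB : ∀ k : ℕ, μ ({ω | S (n + 1) ω = k} ∩ {ω | S n ω = r})
      = μ {ω | S n ω = r} * ENNReal.ofReal ((r.choose k) * p n ^ (r - k) * (1 - p n) ^ k) :=
    htrans n r
  -- value of the integral on each piece, k = r
  have hterm_r : ∫⁻ ω in {ω | S (n + 1) ω = r} ∩ {ω | S n ω = r},
        ENNReal.ofReal (f (Tn n ω)) ∂μ
      = ENNReal.ofReal (f (n + 1)) * μ ({ω | S (n + 1) ω = r} ∩ {ω | S n ω = r}) := by
    have hc : ∫⁻ ω in {ω | S (n + 1) ω = r} ∩ {ω | S n ω = r},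
          ENNReal.ofReal (f (Tn n ω)) ∂μ
        = ∫⁻ _ in {ω | S (n + 1) ω = r} ∩ {ω | S n ω = r}, ENNReal.ofReal (f (n + 1)) ∂μ := by
      refine setLIntegral_congr_fun ((hSeq (n + 1) r).inter hAm) ?_
      rintro ω ⟨h1, h2⟩
      beta_reduce; rw [hTeq1 ω ((h1 : S (n + 1) ω = r).trans (h2 : S n ω = r).symm)]
    rw [hc, setLIntegral_const]
  -- value of the integral on each piece, k < r
  have hterm_lt : ∀ k, k < r →
      ∫⁻ ω in {ω | S (n + 1) ω = k} ∩ {ω | S n ω = r}, ENNReal.ofReal (f (Tn n ω)) ∂μ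
        = φ (n + 1) k * μ ({ω | S (n + 1) ω = k} ∩ {ω | S n ω = r}) := by
    intro k hk
    have hBm : MeasurableSet {ω | S (n + 1) ω = k} := hSeq (n + 1) k
    have hck : (0 : ℝ) < (r.choose k) * p n ^ (r - k) * (1 - p n) ^ k := by
      have h1 := (hp n).1
      have h2 := (hp n).2
      have h3 : (0 : ℝ) < (r.choose k : ℝ) := by
        exact_mod_cast Nat.choose_pos hk.le
      have h4 : (0 : ℝ) < 1 - p n := by linarith
      positivity
    have hABk0 : μ ({ω | S (n + 1) ω = k} ∩ {ω | S n ω = r}) ≠ 0 := by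
      rw [hAB k]
      exact mul_ne_zero hA0 (by simp [ENNReal.ofReal_eq_zero, not_le, hck])
    have hB0 : μ {ω | S (n + 1) ω = k} ≠ 0 := fun h =>
      hABk0 (measure_mono_null Set.inter_subset_left h)
    have hBtop : μ {ω | S (n + 1) ω = k} ≠ ⊤ := measure_ne_top μ _
    have e1 : ∫⁻ ω in {ω | S (n + 1) ω = k} ∩ {ω | S n ω = r},
          ENNReal.ofReal (f (Tn n ω)) ∂μ
        = ∫⁻ ω in {ω | S (n + 1) ω = k} ∩ {ω | S n ω = r},
          ENNReal.ofReal (f (Tn (n + 1) ω)) ∂μ := by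
      refine setLIntegral_congr_fun (hBm.inter hAm) ?_
      rintro ω ⟨h1, h2⟩
      have hne : S (n + 1) ω ≠ S n ω := by
        rw [(h1 : S (n + 1) ω = k), (h2 : S n ω = r)]
        omega
      beta_reduce; rw [hTeq2 ω hne]
    have e2 : (∫⁻ ω in {ω | S (n + 1) ω = k} ∩ {ω | S n ω = r},
            ENNReal.ofReal (f (Tn (n + 1) ω)) ∂μ) * μ {ω | S (n + 1) ω = k}
        = (∫⁻ ω in {ω | S (n + 1) ω = k}, ENNReal.ofReal (f (Tn (n + 1) ω)) ∂μ)
            * μ ({ω | S (n + 1) ω = k} ∩ {ω | S n ω = r}) := by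
      rw [hint (n + 1) _ (hBm.inter hAm), hint (n + 1) _ hBm,
        ← ENNReal.tsum_mul_right, ← ENNReal.tsum_mul_right]
      refine tsum_congr fun t => ?_
      rw [mul_assoc, mul_assoc]
      congr 1
      rw [Set.inter_comm {ω | S (n + 1) ω = k} {ω | S n ω = r}]
      exact hMarkov n r k {ω | Tn (n + 1) ω = t} (hTcomap n t)
    have e3 : ∫⁻ ω in {ω | S (n + 1) ω = k}, ENNReal.ofReal (f (Tn (n + 1) ω)) ∂μ
        = φ (n + 1) k * μ {ω | S (n + 1) ω = k} := by
      rw [hφ' (n + 1) k, mul_comm ((μ {ω | S (n + 1) ω = k})⁻¹) _, mul_assoc,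
        ENNReal.inv_mul_cancel hB0 hBtop, mul_one]
    have e4 : (∫⁻ ω in {ω | S (n + 1) ω = k} ∩ {ω | S n ω = r},
            ENNReal.ofReal (f (Tn (n + 1) ω)) ∂μ) * μ {ω | S (n + 1) ω = k}
        = (φ (n + 1) k * μ ({ω | S (n + 1) ω = k} ∩ {ω | S n ω = r}))
            * μ {ω | S (n + 1) ω = k} := by
      rw [e2, e3]; ring
    have e5 := congrArg (· * (μ {ω | S (n + 1) ω = k})⁻¹) e4
    simp only [mul_assoc, ENNReal.mul_inv_cancel hB0 hBtop, mul_one] at e5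
    rw [e1, e5]
  -- pieces with k > r are null
  have hterm_gt : ∀ k, r < k → μ ({ω | S (n + 1) ω = k} ∩ {ω | S n ω = r}) = 0 := by
    intro k hk
    rw [hAB k, Nat.choose_eq_zero_of_lt hk]
    simp
  -- splitting the integral over {S n = r} according to the value of S (n+1)
  have hsplit : ∫⁻ ω in {ω | S n ω = r}, ENNReal.ofReal (f (Tn n ω)) ∂μ
      = ∑' k : ℕ, ∫⁻ ω in {ω | S (n + 1) ω = k} ∩ {ω | S n ω = r},
          ENNReal.ofReal (f (Tn n ω)) ∂μ := by
    have hcover : {ω | S n ω = r}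
        = ⋃ k : ℕ, ({ω | S (n + 1) ω = k} ∩ {ω | S n ω = r}) := by
      ext ω; simp
    have hdisj : Pairwise (Function.onFun Disjoint
        fun k => {ω | S (n + 1) ω = k} ∩ {ω | S n ω = r}) := by
      intro a b hab
      refine Set.disjoint_left.2 ?_
      rintro ω ⟨ha, -⟩ ⟨hb, -⟩
      exact hab ((ha : S (n + 1) ω = a).symm.trans (hb : S (n + 1) ω = b))
    calc ∫⁻ ω in {ω | S n ω = r}, ENNReal.ofReal (f (Tn n ω)) ∂μ
        = ∫⁻ ω in ⋃ k : ℕ, ({ω | S (n + 1) ω = k} ∩ {ω | S n ω = r}),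
            ENNReal.ofReal (f (Tn n ω)) ∂μ := by rw [← hcover]
      _ = ∑' k : ℕ, ∫⁻ ω in {ω | S (n + 1) ω = k} ∩ {ω | S n ω = r},
            ENNReal.ofReal (f (Tn n ω)) ∂μ :=
          lintegral_iUnion (fun k => (hSeq (n + 1) k).inter hAm) hdisj _
  have hts : (∑' k : ℕ, ∫⁻ ω in {ω | S (n + 1) ω = k} ∩ {ω | S n ω = r},
        ENNReal.ofReal (f (Tn n ω)) ∂μ)
      = ∑ k ∈ Finset.range (r + 1), ∫⁻ ω in {ω | S (n + 1) ω = k} ∩ {ω | S n ω = r},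
        ENNReal.ofReal (f (Tn n ω)) ∂μ := by
    refine tsum_eq_sum (fun k hk => ?_)
    have hrk : r < k := by simpa using hk
    exact setLIntegral_measure_zero _ _ (hterm_gt k hrk)
  have hcancel : ∀ x c : ℝ≥0∞, (μ {ω | S n ω = r})⁻¹ * (x * (μ {ω | S n ω = r} * c)) = c * x := by
    intro x c
    calc (μ {ω | S n ω = r})⁻¹ * (x * (μ {ω | S n ω = r} * c))
        = ((μ {ω | S n ω = r})⁻¹ * μ {ω | S n ω = r}) * (c * x) := by ring
      _ = c * x := by rw [ENNReal.inv_mul_cancel hA0 hAtop, one_mul]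
  have hintA : ∫⁻ ω in {ω | S n ω = r}, ENNReal.ofReal (f (Tn n ω)) ∂μ
      = (∑ k ∈ Finset.range r, φ (n + 1) k
            * (μ {ω | S n ω = r}
              * ENNReal.ofReal ((r.choose k) * p n ^ (r - k) * (1 - p n) ^ k)))
        + ENNReal.ofReal (f (n + 1))
            * (μ {ω | S n ω = r}
              * ENNReal.ofReal ((r.choose r) * p n ^ (r - r) * (1 - p n) ^ r)) := by
    rw [hsplit, hts, Finset.sum_range_succ]
    congr 1
    · refine Finset.sum_congr rfl fun k hk => ?_
      rw [hterm_lt k (Finset.mem_range.mp hk), hAB k]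
    · rw [hterm_r, hAB r]
  constructor
  · intro hr0
    subst hr0
    rw [hφ' n 0, hintA]
    simp only [Finset.range_zero, Finset.sum_empty, zero_add, Nat.choose_self, Nat.sub_self,
      pow_zero, Nat.cast_one, one_mul, mul_one, ENNReal.ofReal_one]
    rw [mul_comm (ENNReal.ofReal (f (n + 1))) (μ {ω | S n ω = 0}), ← mul_assoc,
      ENNReal.inv_mul_cancel hA0 hAtop, one_mul]
  · intro hr
    rw [hφ' n r, hintA, mul_add, Finset.mul_sum]
    have h1 : ∀ k ∈ Finset.range r,
        (μ {ω | S n ω = r})⁻¹ * (φ (n + 1) k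
            * (μ {ω | S n ω = r}
              * ENNReal.ofReal ((r.choose k) * p n ^ (r - k) * (1 - p n) ^ k)))
          = ENNReal.ofReal ((r.choose k) * p n ^ (r - k) * (1 - p n) ^ k) * φ (n + 1) k :=
      fun k _ => hcancel _ _
    rw [Finset.sum_congr rfl h1, hcancel]
    have hq : (0 : ℝ) ≤ 1 - p n := by linarith [(hp n).2]
    have h2 : ENNReal.ofReal ((r.choose r) * p n ^ (r - r) * (1 - p n) ^ r)
          * ENNReal.ofReal (f (n + 1))
        = ENNReal.ofReal (f (n + 1) * (1 - p n) ^ r) := by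
      simp only [Nat.choose_self, Nat.sub_self, pow_zero, Nat.cast_one, one_mul, mul_one]
      rw [← ENNReal.ofReal_mul (pow_nonneg hq r), mul_comm ((1 - p n) ^ r) (f (n + 1))]
    rw [h2, add_comm]
end

section
/- If S_0 ~ Poisson(v), the Poisson averages Φ_v^{(n)}(f) = Σ_{r≥0} e^{-v} v^r / r! · φ_r^{(n)}(f) satisfy the recursion Φ_v^{(n)}(f) = e^{-p_n v} f(n+1) + (1 - e^{-p_n v}) Φ_{q_n v}^{(n+1)}(f). -/
open MeasureTheory ProbabilityTheory
open scoped ENNReal NNReal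


lemma real_exp_tsum' (x : ℝ) : Real.exp x = ∑' n : ℕ, x ^ n / n.factorial := by
  rw [Real.exp_eq_exp_ℝ, NormedSpace.exp_eq_tsum_div]

lemma shifted_tsum' (x : ℝ) : ∑' j : ℕ, x ^ (j+1) / (j+1).factorial = Real.exp x - 1 := by
  have hs := Real.summable_pow_div_factorial x
  have h0 := Summable.tsum_eq_zero_add hs
  rw [real_exp_tsum' x]
  simp only [pow_zero, Nat.factorial_zero, Nat.cast_one, div_one] at h0
  linarith [h0]

lemma expAux (c x : ℝ) (hc : 0 ≤ c) (hx : 0 ≤ x) :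
    ∑' j : ℕ, ENNReal.ofReal (c * (x ^ (j+1) / (j+1).factorial))
      = ENNReal.ofReal (c * (Real.exp x - 1)) := by
  have hs : Summable (fun j : ℕ => x ^ (j+1) / (j+1).factorial) :=
    (summable_nat_add_iff 1).2 (Real.summable_pow_div_factorial x)
  rw [← ENNReal.ofReal_tsum_of_nonneg]
  · rw [tsum_mul_left, shifted_tsum']
  · intro j
    have : (0:ℝ) ≤ x ^ (j+1) / (j+1).factorial := by positivity
    exact mul_nonneg hc this
  · exact hs.mul_left c

/-- **Recursion for the Poisson averages `Φ_v⁽ⁿ⁾(f)`.** Given `f : ℤ₊ → [0,∞)` and the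
conditional expectations `φ n r = E[f(T⁽ⁿ⁾) | S n = r]`, which satisfy
`φ n 0 = f (n+1)` and `φ n r = f (n+1) q n^r + ∑_{k=0}^{r-1} C(r,k) p n^{r-k} q n^k φ (n+1) k`
(`q n = 1 - p n`), the Poisson averages `Φ w n = ∑_{r ≥ 0} e^{-w} w^r / r! · φ n r`
satisfy `Φ v n = e^{-p n v} f (n+1) + (1 - e^{-p n v}) Φ (q n v) (n+1)`. -/
theorem Phi_recursion
    (p : ℕ → ℝ) (hp : ∀ n, 0 < p n ∧ p n < 1)
    (f : ℕ → ℝ) (hf : ∀ k, 0 ≤ f k)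
    (φ : ℕ → ℕ → ℝ) (hφ0 : ∀ n r, 0 ≤ φ n r)
    (hφzero : ∀ n, φ n 0 = f (n + 1))
    (hφrec : ∀ n r, 1 ≤ r → φ n r
        = f (n + 1) * (1 - p n) ^ r
          + ∑ k ∈ Finset.range r,
              (r.choose k : ℝ) * p n ^ (r - k) * (1 - p n) ^ k * φ (n + 1) k)
    (Φ : ℝ → ℕ → ℝ≥0∞)
    (hΦ : ∀ w n, Φ w n
        = ∑' r : ℕ, ENNReal.ofReal (Real.exp (-w) * w ^ r / r.factorial)
            * ENNReal.ofReal (φ n r))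
    (v : ℝ) (hv : 0 < v) :
    ∀ n, Φ v n
        = ENNReal.ofReal (Real.exp (-(p n * v)) * f (n + 1))
          + ENNReal.ofReal (1 - Real.exp (-(p n * v))) * Φ ((1 - p n) * v) (n + 1) := by
  intro n
  obtain ⟨hP, hP1⟩ := hp n
  have hQ : 0 < 1 - p n := by linarith
  have hv' : 0 ≤ v := hv.le
  have key : Real.exp (-v) = Real.exp (-((1 - p n) * v)) * Real.exp (-(p n * v)) := by
    rw [← Real.exp_add]; ring_nf
  have hexple : Real.exp (-(p n * v)) ≤ 1 := by
    exact Real.exp_le_one_iff.2 (by nlinarith)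
  -- split off r = 0
  rw [hΦ v n, tsum_eq_zero_add' ENNReal.summable]
  -- rewrite φ n (b+1)
  have hsplit : ∀ b : ℕ, ENNReal.ofReal (φ n (b+1))
      = ENNReal.ofReal (f (n + 1) * (1 - p n) ^ (b+1))
        + ENNReal.ofReal (∑ k ∈ Finset.range (b+1),
            ((b+1).choose k : ℝ) * p n ^ (b+1 - k) * (1 - p n) ^ k * φ (n + 1) k) := by
    intro b
    rw [hφrec n (b+1) (Nat.le_add_left 1 b)]
    refine ENNReal.ofReal_add (mul_nonneg (hf _) (by positivity)) ?_
    refine Finset.sum_nonneg fun k _ => ?_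
    have h1 : (0:ℝ) ≤ ((b+1).choose k : ℝ) * p n ^ (b+1 - k) * (1 - p n) ^ k := by positivity
    exact mul_nonneg h1 (hφ0 _ _)
  simp only [hsplit, mul_add, ENNReal.tsum_add]
  rw [← add_assoc]
  -- first part
  have hT1 : ENNReal.ofReal (Real.exp (-v) * v ^ 0 / (Nat.factorial 0)) * ENNReal.ofReal (φ n 0)
      + ∑' b : ℕ, ENNReal.ofReal (Real.exp (-v) * v ^ (b+1) / (b+1).factorial)
          * ENNReal.ofReal (f (n + 1) * (1 - p n) ^ (b+1))
      = ENNReal.ofReal (Real.exp (-(p n * v)) * f (n + 1)) := by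
    have hterm : ∀ b : ℕ, ENNReal.ofReal (Real.exp (-v) * v ^ (b+1) / (b+1).factorial)
        * ENNReal.ofReal (f (n + 1) * (1 - p n) ^ (b+1))
        = ENNReal.ofReal ((Real.exp (-v) * f (n+1)) * (((1 - p n) * v) ^ (b+1) / (b+1).factorial)) := by
      intro b
      rw [← ENNReal.ofReal_mul (by positivity)]
      congr 1
      rw [mul_pow]
      ring
    simp only [hterm]
    rw [expAux _ _ (mul_nonneg (Real.exp_pos _).le (hf _)) (mul_nonneg hQ.le hv')]
    rw [hφzero n, pow_zero, Nat.factorial_zero]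
    rw [← ENNReal.ofReal_mul (by positivity)]
    rw [← ENNReal.ofReal_add (mul_nonneg (by positivity) (hf _)) ?hnn]
    case hnn =>
      have h1 : 1 ≤ Real.exp ((1 - p n) * v) := Real.one_le_exp (by positivity)
      have h2 : 0 ≤ Real.exp (-v) * f (n+1) := mul_nonneg (Real.exp_pos _).le (hf _)
      nlinarith
    congr 1
    have hxy : Real.exp (-v) * Real.exp ((1 - p n) * v) = Real.exp (-(p n * v)) := by
      rw [← Real.exp_add]; ring_nf
    rw [← hxy]; ring
  rw [hT1]
  congr 1
  -- second part
  set G : ℕ → ℕ → ℝ≥0∞ := fun b k =>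
    if k ≤ b then
      ENNReal.ofReal (Real.exp (-v) * v ^ (b+1) / (b+1).factorial
        * (((b+1).choose k : ℝ) * p n ^ (b+1 - k) * (1 - p n) ^ k * φ (n + 1) k))
    else 0 with hG
  have hrow : ∀ b : ℕ, ENNReal.ofReal (Real.exp (-v) * v ^ (b+1) / (b+1).factorial)
      * ENNReal.ofReal (∑ k ∈ Finset.range (b+1),
          ((b+1).choose k : ℝ) * p n ^ (b+1 - k) * (1 - p n) ^ k * φ (n + 1) k)
      = ∑' k : ℕ, G b k := by
    intro b
    rw [tsum_eq_sum (s := Finset.range (b+1)) (by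
      intro k hk
      simp only [hG]
      rw [if_neg]
      simpa using fun h => hk (Finset.mem_range.2 (Nat.lt_succ_of_le h)))]
    rw [ENNReal.ofReal_sum_of_nonneg (fun k _ => by
      have h1 : (0:ℝ) ≤ ((b+1).choose k : ℝ) * p n ^ (b+1 - k) * (1 - p n) ^ k := by positivity
      exact mul_nonneg h1 (hφ0 _ _))]
    rw [Finset.mul_sum]
    refine Finset.sum_congr rfl fun k hk => ?_
    simp only [hG]
    rw [if_pos (Nat.lt_succ_iff.1 (Finset.mem_range.1 hk))]
    rw [← ENNReal.ofReal_mul (by positivity)]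
  simp only [hrow]
  rw [ENNReal.tsum_comm]
  have hcol : ∀ k : ℕ, ∑' b : ℕ, G b k
      = ENNReal.ofReal (1 - Real.exp (-(p n * v)))
        * (ENNReal.ofReal (Real.exp (-((1 - p n) * v)) * ((1 - p n) * v) ^ k / k.factorial)
            * ENNReal.ofReal (φ (n + 1) k)) := by
    intro k
    rw [← Summable.sum_add_tsum_nat_add' (f := fun b => G b k) (k := k) ENNReal.summable]
    have hz : ∑ b ∈ Finset.range k, G b k = 0 := by
      refine Finset.sum_eq_zero fun b hb => ?_
      have hb' := Finset.mem_range.1 hb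
      simp only [hG]
      rw [if_neg (by omega)]
    rw [hz, zero_add]
    have hterm2 : ∀ j : ℕ, G (j + k) k
        = ENNReal.ofReal ((Real.exp (-v) * ((1 - p n) * v) ^ k / k.factorial * φ (n+1) k)
            * ((p n * v) ^ (j+1) / (j+1).factorial)) := by
      intro j
      simp only [hG]
      rw [if_pos (Nat.le_add_left k j)]
      congr 1
      have hsub : j + k + 1 - k = j + 1 := by omega
      rw [hsub]
      have hchn : (j+k+1).choose k * (j+1).factorial * k.factorial = (j+k+1).factorial := by
        rw [show j+k+1 = (j+1) + k by omega]
        exact Nat.add_choose_mul_factorial_mul_factorial (j+1) k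
      have hch : ((j+k+1).choose k : ℝ) * (j+1).factorial * k.factorial
          = (j+k+1).factorial := by exact_mod_cast congrArg (Nat.cast (R := ℝ)) hchn
      have hk0 : (k.factorial : ℝ) ≠ 0 := Nat.cast_ne_zero.2 (Nat.factorial_ne_zero _)
      have hj0 : ((j+1).factorial : ℝ) ≠ 0 := Nat.cast_ne_zero.2 (Nat.factorial_ne_zero _)
      have hjk0 : ((j+k+1).factorial : ℝ) ≠ 0 := Nat.cast_ne_zero.2 (Nat.factorial_ne_zero _)
      have hchdiv : ((j+k+1).choose k : ℝ)
          = (j+k+1).factorial / (k.factorial * (j+1).factorial) := by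
        rw [eq_div_iff (mul_ne_zero hk0 hj0)]
        linear_combination hch
      rw [hchdiv, mul_pow, mul_pow]
      field_simp
      ring
    simp only [hterm2]
    have hc0 : (0:ℝ) ≤ Real.exp (-v) * ((1 - p n) * v) ^ k / k.factorial * φ (n+1) k := by
      have h1 : (0:ℝ) ≤ Real.exp (-v) * ((1 - p n) * v) ^ k / k.factorial := by positivity
      exact mul_nonneg h1 (hφ0 _ _)
    rw [expAux _ _ hc0 (mul_nonneg hP.le hv')]
    rw [← ENNReal.ofReal_mul (by positivity), ← ENNReal.ofReal_mul (by
      have : (0:ℝ) ≤ Real.exp (-(p n * v)) := (Real.exp_pos _).le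
      linarith)]
    congr 1
    have h3 : Real.exp (-(p n * v)) * Real.exp (p n * v) = 1 := by
      rw [← Real.exp_add]; simp
    linear_combination (((1 - p n) * v) ^ k / k.factorial * φ (n+1) k
        * (Real.exp (p n * v) - 1)) * key
      + (Real.exp (-((1 - p n) * v)) * (((1 - p n) * v) ^ k / k.factorial) * φ (n+1) k) * h3
  simp only [hcol]
  rw [ENNReal.tsum_mul_left, ← hΦ]
end

section
/- Suppose U_1 ~ Geometric(p) (P(U_1 > m) = q^m, q = 1 - p) and S_0 ~ Poisson(v). Then the probability generating function G_v(z) = E[z^T] satisfies the functional equation G_v(z)/z = e^{-pv} + (1 - e^{-pv}) G_{qv}(z). -/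
open MeasureTheory ProbabilityTheory
open scoped ENNReal NNReal

/-- **Functional equation for the p.g.f. of `T`** (geometric response times, Poisson(v)
prior).  With `λ_j(w) = 1 - e^{-p q^{j-1} w}` (`q = 1 - p`) and
`G w z = E[z^T] = (1 - λ₁) z + ∑_{n ≥ 2} λ₁ ⋯ λ_{n-1} (1 - λ_n) z^n`
(the parameter of the Poisson prior being `w`), the p.g.f. satisfies
`G v z / z = e^{-p v} + (1 - e^{-p v}) G (q v) z`. -/
theorem pgf_functional_equation_poisson
    (p : ℝ) (hp : 0 < p ∧ p < 1) (v : ℝ) (hv : 0 < v)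
    (lam : ℝ → ℕ → ℝ≥0∞)
    (hlam : ∀ w j, lam w j = ENNReal.ofReal (1 - Real.exp (-(p * (1 - p) ^ (j - 1) * w))))
    (G : ℝ → ℝ → ℝ≥0∞)
    (hG : ∀ w z, G w z
        = ∑' n : ℕ, (∏ j ∈ Finset.Icc 1 n, lam w j) * (1 - lam w (n + 1))
            * ENNReal.ofReal z ^ (n + 1)) :
    ∀ z : ℝ, 0 ≤ z →
      G v z = ENNReal.ofReal z
        * (ENNReal.ofReal (Real.exp (-(p * v)))
            + ENNReal.ofReal (1 - Real.exp (-(p * v))) * G ((1 - p) * v) z) := by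
  intro z hz
  obtain ⟨hp0, hp1⟩ := hp
  set e := Real.exp (-(p * v)) with he
  have he0 : 0 ≤ e := Real.exp_nonneg _
  have he1 : e ≤ 1 := by
    rw [he, Real.exp_le_one_iff]
    nlinarith
  have hl1 : lam v 1 = ENNReal.ofReal (1 - e) := by
    rw [hlam]; norm_num; rfl
  have hcompl : (1 : ℝ≥0∞) - lam v 1 = ENNReal.ofReal e := by
    rw [hl1, ENNReal.ofReal_sub _ he0, ENNReal.ofReal_one,
      ENNReal.sub_sub_cancel (by norm_num) (by simpa using ENNReal.ofReal_le_one.2 he1)]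
  have hshift : ∀ j : ℕ, 1 ≤ j → lam v (j + 1) = lam ((1 - p) * v) j := by
    intro j hj
    obtain ⟨k, rfl⟩ := Nat.exists_eq_add_of_le hj
    rw [hlam, hlam]
    congr 3
    simp only [show 1 + k + 1 - 1 = k + 1 from by omega, show 1 + k - 1 = k from by omega,
      pow_succ]
    ring
  have hprod : ∀ n : ℕ, ∏ j ∈ Finset.Icc 1 (n + 1), lam v j
      = lam v 1 * ∏ j ∈ Finset.Icc 1 n, lam ((1 - p) * v) j := by
    intro n
    induction n with
    | zero => simp
    | succ k ih =>
      rw [Finset.prod_Icc_succ_top (by omega), ih, Finset.prod_Icc_succ_top (by omega),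
        hshift (k + 1) (by omega), mul_assoc]
  rw [hG v z, hG ((1 - p) * v) z,
    tsum_eq_zero_add' (ENNReal.summable)]
  have h0 : (∏ j ∈ Finset.Icc 1 0, lam v j) * (1 - lam v (0 + 1)) * ENNReal.ofReal z ^ (0 + 1)
      = ENNReal.ofReal e * ENNReal.ofReal z := by
    simp [hcompl]
  rw [h0]
  have hterm : ∀ n : ℕ,
      (∏ j ∈ Finset.Icc 1 (n + 1), lam v j) * (1 - lam v (n + 1 + 1))
          * ENNReal.ofReal z ^ (n + 1 + 1)
      = ENNReal.ofReal (1 - e) * ENNReal.ofReal z *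
          ((∏ j ∈ Finset.Icc 1 n, lam ((1 - p) * v) j) * (1 - lam ((1 - p) * v) (n + 1))
            * ENNReal.ofReal z ^ (n + 1)) := by
    intro n
    rw [hprod, hshift (n + 1) (by omega), hl1, pow_succ]
    ring
  rw [tsum_congr hterm, ENNReal.tsum_mul_left]
  ring
end

section
/- If U_1 ~ Geometric(p), then conditionally on S_0 = r, the expected total marketing effort satisfies E[M | S_0 = r] = E[Y | S_0 = r] / p. -/
/-!
Client `s` contributes `1{1 ≤ U s < T}` to `Y` and, almost surely, `min (U s) T` to `M`; the
layer-cake formula writes the latter as `∑ n, 1{n < U s, n < T}`, while the former splits as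
`∑ n, 1{U s = n + 1, n < T}` because no client responds exactly at time `T`. On `{n < U s}` the
event `{n < T}` only asks that every time `1, …, n` be hit by some other client, so it is
independent of `U s`, and memorylessness of the geometric law gives
`P(U s = n + 1, n < T) = p · P(n < U s, n < T)`. Summing over `n` and `s`, `E[Y] = p · E[M]`.
-/

open MeasureTheory ProbabilityTheory Finset
open scoped ENNReal

/-- The paper's `T` for a realization `u` of the response times of clients `0, …, r - 1`. -/
noncomputable def firstSilence (r : ℕ) (u : ℕ → ℕ) : ℕ := sInf {n | 1 ≤ n ∧ ∀ s < r, u s ≠ n}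

section firstSilence

variable {r n s : ℕ} {u : ℕ → ℕ}

lemma exists_silence (r : ℕ) (u : ℕ → ℕ) : ∃ n, 1 ≤ n ∧ ∀ s < r, u s ≠ n :=
  ⟨1 + ∑ s ∈ range r, u s, by omega, fun s hs h => by
    have := single_le_sum (f := u) (fun _ _ => Nat.zero_le _) (mem_range.2 hs)
    omega⟩

lemma one_le_firstSilence : 1 ≤ firstSilence r u := (Nat.sInf_mem (exists_silence r u)).1

lemma ne_firstSilence (hs : s < r) : u s ≠ firstSilence r u :=
  (Nat.sInf_mem (exists_silence r u)).2 s hs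

lemma lt_firstSilence_iff : n < firstSilence r u ↔ ∀ k ∈ Icc 1 n, ∃ s < r, u s = k := by
  constructor
  · intro h k hk
    by_contra! hne
    have : firstSilence r u ≤ k := Nat.sInf_le ⟨(mem_Icc.1 hk).1, hne⟩
    have := (mem_Icc.1 hk).2
    omega
  · intro h
    by_contra! hle
    obtain ⟨s, hs, heq⟩ := h _ (mem_Icc.2 ⟨one_le_firstSilence, hle⟩)
    exact ne_firstSilence hs heq

lemma lt_firstSilence_iff_of_lt (h : n < u s) :
    n < firstSilence r u ↔ ∀ k ∈ Icc 1 n, ∃ t < r, t ≠ s ∧ u t = k := by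
  rw [lt_firstSilence_iff]
  refine forall₂_congr fun k hk =>
    ⟨fun ⟨t, ht, hkt⟩ => ⟨t, ht, ?_, hkt⟩, fun ⟨t, ht, _, hkt⟩ => ⟨t, ht, hkt⟩⟩
  rintro rfl
  have := (mem_Icc.1 hk).2
  omega

lemma dependsOn_firstSilence (r : ℕ) : DependsOn (firstSilence r) (Set.Iio r) := by
  intro u v h
  have (n : ℕ) : (∀ s < r, u s ≠ n) ↔ ∀ s < r, v s ≠ n :=
    forall₂_congr fun s hs => by rw [h s hs]
  simp only [firstSilence, this]

end firstSilence

lemma ite_lt_eq_min {a b : ℕ} (ha : a ≠ 0) : (if 1 ≤ a ∧ a < b then a else b) = min a b := by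
  split_ifs <;> omega

lemma DependsOn.measurable_comp {Ω ι α β : Type*} [MeasurableSpace Ω] [MeasurableSpace α]
    [Countable α] [MeasurableSingletonClass α] [MeasurableSpace β] [Nonempty β]
    {F : (ι → α) → β} {S : Set ι} [Finite S] (hF : DependsOn F S)
    {U : ι → Ω → α} (hU : ∀ i, Measurable (U i)) : Measurable fun ω => F fun i => U i ω := by
  obtain ⟨g, rfl⟩ := dependsOn_iff_exists_comp.1 hF
  exact Measurable.of_discrete.comp (measurable_pi_lambda _ fun i => hU i)

lemma ProbabilityTheory.iIndepFun.indepFun_finset_of_notMem {Ω ι β : Type*}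
    [MeasurableSpace Ω] {μ : Measure Ω} [MeasurableSpace β] {f : ι → Ω → β}
    (h : iIndepFun f μ) (hf : ∀ i, Measurable (f i)) {i : ι} {J : Finset ι} (hi : i ∉ J) : IndepFun (f i) (fun ω (j : J) => f j ω) μ :=
  (h.indepFun_finset {i} J (disjoint_singleton_left.2 hi) hf).comp
    (measurable_pi_apply (⟨i, mem_singleton_self i⟩ : ({i} : Finset ι))) measurable_id

section Integrals

variable {Ω : Type*} [MeasurableSpace Ω] {μ : Measure Ω}

lemma natCast_eq_tsum_indicator (k : ℕ) :
    (k : ℝ≥0∞) = ∑' n, (Set.Iio k).indicator 1 n := by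
  rw [tsum_eq_sum (s := range k) fun n hn => by simpa using hn]
  simp [Set.indicator_apply, filter_true_of_mem fun n hn => mem_range.1 hn]

lemma lintegral_natCast_eq_tsum_measure_lt {f : Ω → ℕ} (hf : Measurable f) :
    ∫⁻ ω, (f ω : ℝ≥0∞) ∂μ = ∑' n, μ {ω | n < f ω} := by
  have hmeas (n : ℕ) : MeasurableSet {ω | n < f ω} := hf measurableSet_Ioi
  calc ∫⁻ ω, (f ω : ℝ≥0∞) ∂μ = ∫⁻ ω, ∑' n, {ω | n < f ω}.indicator 1 ω ∂μ := by
        congr! 2 with ω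
        rw [natCast_eq_tsum_indicator]
        congr! 2 with n
    _ = ∑' n, ∫⁻ ω, {ω | n < f ω}.indicator 1 ω ∂μ :=
        lintegral_tsum fun n => (measurable_one.indicator (hmeas n)).aemeasurable
    _ = ∑' n, μ {ω | n < f ω} := by simp only [lintegral_indicator_one (hmeas _)]

lemma lintegral_card_filter {ι : Type*} (S : Finset ι) {P : ι → Ω → Prop}
    [∀ i ω, Decidable (P i ω)] (hP : ∀ i, MeasurableSet {ω | P i ω}) :
    ∫⁻ ω, (#{i ∈ S | P i ω} : ℝ≥0∞) ∂μ = ∑ i ∈ S, μ {ω | P i ω} := by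
  simp_rw [card_filter, Nat.cast_sum, Nat.cast_ite, Nat.cast_one, Nat.cast_zero]
  rw [lintegral_finsetSum _ fun i _ => measurable_const.ite (hP i) measurable_const]
  refine sum_congr rfl fun i _ => ?_
  simp_rw [← lintegral_indicator_one (hP i), Set.indicator_apply, Set.mem_ofPred_eq, Pi.one_apply]

lemma measurable_card_filter {ι : Type*} (S : Finset ι) {P : ι → Ω → Prop}
    [∀ i ω, Decidable (P i ω)] (hP : ∀ i, MeasurableSet {ω | P i ω}) :
    Measurable fun ω => #{i ∈ S | P i ω} := by
  simp only [card_filter]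
  exact measurable_sum _ fun i _ => measurable_const.ite (hP i) measurable_const

lemma integral_natCast_eq_toReal_lintegral {f : Ω → ℕ} (hf : AEMeasurable f μ) :
    ∫ ω, (f ω : ℝ) ∂μ = (∫⁻ ω, (f ω : ℝ≥0∞) ∂μ).toReal := by
  simpa using integral_toReal (Measurable.of_discrete.comp_aemeasurable hf)
    (ae_of_all μ fun ω => ENNReal.natCast_lt_top (f ω))

end Integrals

section Geometric

variable {Ω : Type*} [MeasurableSpace Ω] {μ : Measure Ω} {p : ℝ} {V : Ω → ℕ}

lemma measure_lt_eq_pow_of_geometric (hV : Measurable V) (hp₀ : 0 < p) (hp₁ : p ≤ 1)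
    (hpmf : ∀ n, 1 ≤ n → μ {ω | V ω = n} = ENNReal.ofReal (p * (1 - p) ^ (n - 1))) (n : ℕ) :
    μ {ω | n < V ω} = ENNReal.ofReal ((1 - p) ^ n) := by
  have hunion : {ω | n < V ω} = ⋃ k, {ω | V ω = n + 1 + k} := by
    ext ω
    simp only [Set.mem_ofPred_eq, Set.mem_iUnion]
    exact ⟨fun h => ⟨V ω - (n + 1), by omega⟩, fun ⟨k, hk⟩ => by omega⟩
  have hdisj : Pairwise (Function.onFun Disjoint fun k => {ω | V ω = n + 1 + k}) :=
    fun k l hkl => Set.disjoint_left.2 fun ω hk hl => hkl (by simp_all)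
  have hterm (k : ℕ) : 0 ≤ p * (1 - p) ^ (n + k) :=
    mul_nonneg hp₀.le (pow_nonneg (sub_nonneg.2 hp₁) _)
  have hsum : HasSum (fun k => p * (1 - p) ^ (n + k)) ((1 - p) ^ n) := by
    have h := (hasSum_geometric_of_lt_one (sub_nonneg.2 hp₁) (by linarith)).mul_left
      (p * (1 - p) ^ n)
    rw [sub_sub_cancel, mul_right_comm, mul_inv_cancel₀ hp₀.ne', one_mul] at h
    simpa only [pow_add, mul_assoc] using h
  rw [hunion, measure_iUnion hdisj fun k => hV (measurableSet_singleton _)]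
  simp_rw [hpmf _ (Nat.le_add_right_of_le (Nat.le_add_left 1 n)),
    show ∀ k, n + 1 + k - 1 = n + k by omega]
  rw [← ENNReal.ofReal_tsum_of_nonneg hterm hsum.summable, hsum.tsum_eq]

lemma measure_eq_succ_of_geometric (hV : Measurable V) (hp₀ : 0 < p) (hp₁ : p ≤ 1)
    (hpmf : ∀ n, 1 ≤ n → μ {ω | V ω = n} = ENNReal.ofReal (p * (1 - p) ^ (n - 1))) (n : ℕ) :
    μ {ω | V ω = n + 1} = ENNReal.ofReal p * μ {ω | n < V ω} := by
  rw [measure_lt_eq_pow_of_geometric hV hp₀ hp₁ hpmf, ← ENNReal.ofReal_mul hp₀.le,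
    hpmf _ le_add_self, Nat.add_sub_cancel]

end Geometric

section Clients

variable {Ω : Type*} [MeasurableSpace Ω] {μ : Measure Ω} {r s : ℕ} {U : ℕ → Ω → ℕ}

lemma measurable_firstSilence (hU : ∀ s, Measurable (U s)) :
    Measurable fun ω => firstSilence r fun s => U s ω :=
  (dependsOn_firstSilence r).measurable_comp (S := Set.Iio r) hU

lemma measure_eq_succ_lt_firstSilence (hU : ∀ s, Measurable (U s)) (hindep : iIndepFun U μ)
    {c : ℝ≥0∞} {n : ℕ} (hhazard : μ {ω | U s ω = n + 1} = c * μ {ω | n < U s ω}) :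
    μ {ω | U s ω = n + 1 ∧ n < firstSilence r fun t => U t ω}
      = c * μ {ω | n < U s ω ∧ n < firstSilence r fun t => U t ω} := by
  set J := (range r).erase s
  set B : Set (J → ℕ) := {v | ∀ k ∈ Icc 1 n, ∃ j, v j = k}
  have hB (ω) (h : n < U s ω) :
      (n < firstSilence r fun t => U t ω) ↔ (fun j : J => U j ω) ∈ B := by
    rw [lt_firstSilence_iff_of_lt (u := fun t => U t ω) h]
    simp [B, J, and_comm, and_assoc]
  have hind := hindep.indepFun_finset_of_notMem hU (notMem_erase s (range r))
  have hfactor (E : Set ℕ) (hE : ∀ m ∈ E, n < m) :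
      μ {ω | U s ω ∈ E ∧ n < firstSilence r fun t => U t ω}
        = μ (U s ⁻¹' E) * μ ((fun ω (j : J) => U j ω) ⁻¹' B) := by
    rw [← hind.measure_inter_preimage_eq_mul _ _ (.of_discrete) (.of_discrete)]
    congr 1
    ext ω
    exact and_congr_right fun h => hB ω (hE _ h)
  have h₁ := hfactor {n + 1} (by simp)
  have h₂ := hfactor (Set.Ioi n) fun _ => id
  simp only [Set.preimage, Set.mem_singleton_iff, Set.mem_Ioi] at h₁ h₂
  rw [h₁, h₂, hhazard, mul_assoc]

lemma measure_responds_before_firstSilence (hU : ∀ s, Measurable (U s)) (hindep : iIndepFun U μ)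
    (hs : s < r) {c : ℝ≥0∞} (hhazard : ∀ n, μ {ω | U s ω = n + 1} = c * μ {ω | n < U s ω}) :
    μ {ω | 1 ≤ U s ω ∧ U s ω < firstSilence r fun t => U t ω}
      = c * ∫⁻ ω, ((min (U s ω) (firstSilence r fun t => U t ω) : ℕ) : ℝ≥0∞) ∂μ := by
  set T := fun ω => firstSilence r fun t => U t ω
  have hpair : Measurable fun ω => (U s ω, T ω) := (hU s).prodMk (measurable_firstSilence hU)
  have hunion : {ω | 1 ≤ U s ω ∧ U s ω < T ω} = ⋃ n, {ω | U s ω = n + 1 ∧ n < T ω} := by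
    ext ω
    have : U s ω ≠ T ω := ne_firstSilence (u := fun t => U t ω) hs
    simp only [Set.mem_ofPred_eq, Set.mem_iUnion]
    exact ⟨fun h => ⟨U s ω - 1, by omega⟩, fun ⟨n, hn⟩ => by omega⟩
  have hdisj : Pairwise (Function.onFun Disjoint fun n => {ω | U s ω = n + 1 ∧ n < T ω}) :=
    fun n m hnm => Set.disjoint_left.2 fun ω hn hm => hnm (by simp_all)
  calc μ {ω | 1 ≤ U s ω ∧ U s ω < T ω}
      = ∑' n, μ {ω | U s ω = n + 1 ∧ n < T ω} :=
        hunion ▸ measure_iUnion hdisj fun n =>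
          hpair (.of_discrete (s := {x : ℕ × ℕ | x.1 = n + 1 ∧ n < x.2}))
    _ = ∑' n, c * μ {ω | n < U s ω ∧ n < T ω} :=
        tsum_congr fun n => measure_eq_succ_lt_firstSilence hU hindep (hhazard n)
    _ = c * ∫⁻ ω, ((min (U s ω) (T ω) : ℕ) : ℝ≥0∞) ∂μ := by
        have hmin : Measurable fun ω => min (U s ω) (T ω) :=
          (Measurable.of_discrete (f := fun x : ℕ × ℕ => min x.1 x.2)).comp hpair
        rw [ENNReal.tsum_mul_left, lintegral_natCast_eq_tsum_measure_lt hmin]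
        simp only [lt_min_iff]

end Clients

theorem effort_eq_yield_div_p_general
    {Ω : Type*} [MeasurableSpace Ω] (μ : Measure Ω)
    (p : ℝ) (hp : 0 < p ∧ p < 1) (q : ℝ) (hq : q = 1 - p)
    (r : ℕ)
    (U : ℕ → Ω → ℕ) (hUm : ∀ s, Measurable (U s))
    (hindep : iIndepFun U μ)
    (hU : ∀ s, ∀ n, 1 ≤ n → μ {ω | U s ω = n} = ENNReal.ofReal (p * q ^ (n - 1)))
    (hU0 : ∀ s, μ {ω | U s ω = 0} = 0)
    (X : ℕ → Ω → ℕ)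
    (hX : ∀ n ω, X n ω = ((Finset.range r).filter (fun s => U s ω = n)).card)
    (T : Ω → ℕ) (hT : ∀ ω, T ω = sInf {n | 1 ≤ n ∧ X n ω = 0})
    (Y : Ω → ℕ) (hY : ∀ ω, Y ω = ∑ n ∈ Finset.Ico 1 (T ω), X n ω)
    (M : Ω → ℕ)
    (hM : ∀ ω, M ω = ∑ s ∈ Finset.range r,
        (if 1 ≤ U s ω ∧ U s ω < T ω then U s ω else T ω)) :
    ∫ ω, (M ω : ℝ) ∂μ = (∫ ω, (Y ω : ℝ) ∂μ) / p := by
  subst hq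
  obtain rfl : T = fun ω => firstSilence r fun s => U s ω := funext fun ω => by
    simp only [hT, hX, card_eq_zero, filter_eq_empty_iff, mem_range, firstSilence]
  have hpair (s : ℕ) : Measurable fun ω => (U s ω, firstSilence r fun t => U t ω) :=
    (hUm s).prodMk (measurable_firstSilence hUm)
  obtain rfl : Y = fun ω => #{s ∈ range r | 1 ≤ U s ω ∧ U s ω < firstSilence r fun t => U t ω} :=
    funext fun ω => by simp only [hY, hX, sum_card_fiberwise_eq_card_filter, mem_Ico]
  have hMmin : M =ᵐ[μ] fun ω => ∑ s ∈ range r, min (U s ω) (firstSilence r fun t => U t ω) := by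
    have hpos : ∀ᵐ ω ∂μ, ∀ s, U s ω ≠ 0 := ae_all_iff.2 fun s => ae_iff.2 (by simpa using hU0 s)
    filter_upwards [hpos] with ω hω
    exact (hM ω).trans (sum_congr rfl fun s _ => ite_lt_eq_min (hω s))
  have hmin (s : ℕ) : Measurable fun ω => min (U s ω) (firstSilence r fun t => U t ω) :=
    (Measurable.of_discrete (f := fun x : ℕ × ℕ => min x.1 x.2)).comp (hpair s)
  have hresp (s : ℕ) : MeasurableSet {ω | 1 ≤ U s ω ∧ U s ω < firstSilence r fun t => U t ω} :=
    hpair s (.of_discrete (s := {x : ℕ × ℕ | 1 ≤ x.1 ∧ x.1 < x.2}))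
  have hlintegral :
      ∫⁻ ω, (#{s ∈ range r | 1 ≤ U s ω ∧ U s ω < firstSilence r fun t => U t ω} : ℝ≥0∞) ∂μ
        = ENNReal.ofReal p * ∫⁻ ω, (M ω : ℝ≥0∞) ∂μ := by
    rw [lintegral_card_filter _ hresp,
      lintegral_congr_ae (hMmin.mono fun ω h => congrArg Nat.cast h)]
    simp only [Nat.cast_sum]
    rw [lintegral_finsetSum _ fun s _ => by fun_prop, mul_sum]
    exact sum_congr rfl fun s hs => measure_responds_before_firstSilence hUm hindep
      (mem_range.1 hs) (measure_eq_succ_of_geometric (hUm s) hp.1 hp.2.le (hU s))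
  rw [integral_natCast_eq_toReal_lintegral ⟨_, measurable_sum _ fun s _ => hmin s, hMmin⟩,
    integral_natCast_eq_toReal_lintegral (measurable_card_filter _ hresp).aemeasurable,
    hlintegral, ENNReal.toReal_mul, ENNReal.toReal_ofReal hp.1.le, mul_div_cancel_left₀ _ hp.1.ne']

/-- **Marketing effort versus yield, geometric case, fixed pool.** With `r` clients whose
response times `U 0, …, U (r-1)` are i.i.d. `Geometric(p)` (`P(U s = n) = p q^{n-1}`,
`n ≥ 1`, `q = 1 - p`), `X n = #{s < r : U s = n}`, `T = min {n ≥ 1 : X n = 0}`,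
`Y = X 1 + ⋯ + X (T-1)` the total yield and
`M = ∑_{s < r} (U s · 1{U s < T} + T · 1{U s > T})` the total marketing effort:
`E[M | S₀ = r] = E[Y | S₀ = r] / p`. -/
theorem effort_eq_yield_div_p
    {Ω : Type*} [MeasurableSpace Ω] (μ : Measure Ω) [IsProbabilityMeasure μ]
    (p : ℝ) (hp : 0 < p ∧ p < 1) (q : ℝ) (hq : q = 1 - p)
    (r : ℕ)
    (U : ℕ → Ω → ℕ) (hUm : ∀ s, Measurable (U s))
    (hindep : iIndepFun U μ)
    (hU : ∀ s, ∀ n, 1 ≤ n → μ {ω | U s ω = n} = ENNReal.ofReal (p * q ^ (n - 1)))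
    (hU0 : ∀ s, μ {ω | U s ω = 0} = 0)
    (X : ℕ → Ω → ℕ)
    (hX : ∀ n ω, X n ω = ((Finset.range r).filter (fun s => U s ω = n)).card)
    (T : Ω → ℕ) (hT : ∀ ω, T ω = sInf {n | 1 ≤ n ∧ X n ω = 0})
    (Y : Ω → ℕ) (hY : ∀ ω, Y ω = ∑ n ∈ Finset.Ico 1 (T ω), X n ω)
    (M : Ω → ℕ)
    (hM : ∀ ω, M ω = ∑ s ∈ Finset.range r,
        (if 1 ≤ U s ω ∧ U s ω < T ω then U s ω else T ω)) :
    ∫ ω, (M ω : ℝ) ∂μ = (∫ ω, (Y ω : ℝ) ∂μ) / p :=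
  effort_eq_yield_div_p_general μ p hp q hq r U hUm hindep hU hU0 X hX T hT Y hY M hM
end

section
/- If U_1 ~ Geometric(p) and S_0 = r is fixed, then for every z > 0, E[z^Y / (q + pz)^M] = 1, where Y is the total yield and M the total marketing effort. -/
/-!
Each client contributes the factor `z / a ^ k` to `V_t` once it has responded at time `k ≤ t`,
and `1 / a ^ t` while still silent, where `a = q + p z`. For a silent client,
`E[factor at t + 1 | U > t] = (p z + q) / a ^ (t + 1) = 1 / a ^ t`, so `V_t` is a product of
independent martingales, and `T` is a stopping time bounded by `r + 1` (pigeonhole). Optional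
stopping gives `E V_T = V_0 = 1`. Since `T ≤ r + 1`, replacing each `U s` by `min (U s) (r + 2)`
does not change `V_T`, which turns the expectation into a finite sum over a box; there the
martingale step is checked by conditioning on `min U (t + 1)`, which determines `{T ≤ t}` and
leaves the silent clients independent.
-/

open MeasureTheory ProbabilityTheory Finset

namespace GeometricResponse

section StoppedProduct

variable {ι α β R : Type*} [Fintype ι] [DecidableEq ι] [DecidableEq β]

theorem sum_piFinset_filter_comp_eq_prod [CommSemiring R] (S : Finset α) (h : α → β)
    (A : α → R) (v : ι → β) :
    ∑ w ∈ Fintype.piFinset (fun _ => S) with h ∘ w = v, ∏ i, A (w i) =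
      ∏ i, ∑ k ∈ S with h k = v i, A k := by
  rw [prod_univ_sum]
  congr 1
  ext w
  simp [Fintype.mem_piFinset, funext_iff, forall_and]

theorem sum_piFinset_mul_prod_congr [CommSemiring R] (S : Finset α) (h : α → β)
    (φ : (ι → β) → R) {A B : α → R}
    (hAB : ∀ c, ∑ k ∈ S with h k = c, A k = ∑ k ∈ S with h k = c, B k) :
    ∑ w ∈ Fintype.piFinset (fun _ => S), φ (h ∘ w) * ∏ i, A (w i) =
      ∑ w ∈ Fintype.piFinset (fun _ => S), φ (h ∘ w) * ∏ i, B (w i) := by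
  have hmaps : ∀ w ∈ Fintype.piFinset (fun _ : ι => S),
      h ∘ w ∈ Fintype.piFinset (fun _ : ι => S.image h) := by
    simp only [Fintype.mem_piFinset, Function.comp_apply]
    exact fun w hw i => mem_image_of_mem h (hw i)
  have hfiber (C : α → R) (v : ι → β) :
      ∑ w ∈ Fintype.piFinset (fun _ => S) with h ∘ w = v, φ (h ∘ w) * ∏ i, C (w i) =
        φ v * ∏ i, ∑ k ∈ S with h k = v i, C k := by
    rw [← sum_piFinset_filter_comp_eq_prod, mul_sum]
    exact sum_congr rfl fun w hw => by rw [(mem_filter.1 hw).2]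
  rw [← sum_fiberwise_of_maps_to hmaps, ← sum_fiberwise_of_maps_to hmaps]
  simp only [hfiber, hAB]

variable [CommRing R]

theorem sum_prod_stopped_succ (S : Finset ℕ) (π : ℕ → R) (F : ℕ → ℕ → R)
    (T : (ι → ℕ) → ℕ) (t : ℕ) (hfrozen : ∀ k ≤ t, F (t + 1) k = F t k)
    (hmart : ∑ k ∈ S with t < k, π k * F (t + 1) k = ∑ k ∈ S with t < k, π k * F t k)
    (hstop : ∀ w, T w ≤ t ↔ T (fun i => min (w i) (t + 1)) ≤ t) :
    ∑ w ∈ Fintype.piFinset (fun _ => S), ∏ i, π (w i) * F (min (T w) (t + 1)) (w i) =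
      ∑ w ∈ Fintype.piFinset (fun _ => S), ∏ i, π (w i) * F (min (T w) t) (w i) := by
  let φ : (ι → ℕ) → R := fun v => if T v ≤ t then 0 else 1
  have hsplit (w : ι → ℕ) :
      ∏ i, π (w i) * F (min (T w) (t + 1)) (w i) =
        ∏ i, π (w i) * F (min (T w) t) (w i) + φ ((min · (t + 1)) ∘ w) *
          (∏ i, π (w i) * F (t + 1) (w i) - ∏ i, π (w i) * F t (w i)) := by
    by_cases hw : T w ≤ t
    · have : T ((min · (t + 1)) ∘ w) ≤ t := (hstop w).1 hw
      simp [φ, this, min_eq_left hw, min_eq_left (hw.trans t.le_succ)]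
    · have : ¬ T ((min · (t + 1)) ∘ w) ≤ t := mt (hstop w).2 hw
      have hlt : t < T w := not_le.1 hw
      simp [φ, this, min_eq_right hlt.le, min_eq_right (Nat.succ_le_of_lt hlt)]
  have hfiber (c : ℕ) : ∑ k ∈ S with min k (t + 1) = c, π k * F (t + 1) k =
      ∑ k ∈ S with min k (t + 1) = c, π k * F t k := by
    by_cases hc : c ≤ t
    · refine sum_congr rfl fun k hk => ?_
      rw [hfrozen k (by have := (mem_filter.1 hk).2; omega)]
    rcases eq_or_ne c (t + 1) with rfl | hne
    · rwa [filter_congr fun k _ => show min k (t + 1) = t + 1 ↔ t < k by omega]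
    · rw [filter_false_of_mem fun k _ => by omega, sum_empty, sum_empty]
  simp only [hsplit, sum_add_distrib, mul_sub, sum_sub_distrib,
    sum_piFinset_mul_prod_congr S _ φ hfiber, sub_self, add_zero]

theorem sum_prod_stopped_eq_pow (S : Finset ℕ) (π : ℕ → R) (F : ℕ → ℕ → R)
    (T : (ι → ℕ) → ℕ) (t₀ : ℕ) (hfrozen : ∀ t, ∀ k ≤ t, F (t + 1) k = F t k)
    (hmart : ∀ t < t₀,
      ∑ k ∈ S with t < k, π k * F (t + 1) k = ∑ k ∈ S with t < k, π k * F t k)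
    (hstop : ∀ t w, T w ≤ t ↔ T (fun i => min (w i) (t + 1)) ≤ t)
    (hT : ∀ w, T w ≤ t₀) :
    ∑ w ∈ Fintype.piFinset (fun _ => S), ∏ i, π (w i) * F (T w) (w i) =
      (∑ k ∈ S, π k * F 0 k) ^ Fintype.card ι := by
  have hstopped : ∀ t ≤ t₀,
      ∑ w ∈ Fintype.piFinset (fun _ : ι => S), ∏ i, π (w i) * F (min (T w) t) (w i) =
        ∑ w ∈ Fintype.piFinset (fun _ : ι => S), ∏ i, π (w i) * F 0 (w i) := by
    intro t ht
    induction t with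
    | zero => simp
    | succ t ih =>
      rw [sum_prod_stopped_succ S π F T t (hfrozen t) (hmart t ht) (hstop t), ih (by omega)]
  calc _ = ∑ w ∈ Fintype.piFinset (fun _ => S), ∏ i, π (w i) * F (min (T w) t₀) (w i) := by
        simp only [min_eq_left (hT _)]
    _ = ∏ _ : ι, ∑ k ∈ S, π k * F 0 k := by rw [hstopped t₀ le_rfl, prod_univ_sum]
    _ = _ := by rw [prod_const, card_univ]

end StoppedProduct

section FirstGap

variable {ι : Type*} [Fintype ι]

noncomputable def firstGap (u : ι → ℕ) : ℕ := sInf {n | 1 ≤ n ∧ ∀ i, u i ≠ n}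

theorem exists_gap_le_card_add_one (u : ι → ℕ) :
    ∃ n, 1 ≤ n ∧ n ≤ Fintype.card ι + 1 ∧ ∀ i, u i ≠ n := by
  classical
  have hcard : #(univ.image u) < #(Icc 1 (Fintype.card ι + 1)) := by
    simpa using (card_image_le (s := univ) (f := u)).trans_lt (Nat.lt_succ_self _)
  obtain ⟨n, hn, hnu⟩ := exists_mem_notMem_of_card_lt_card hcard
  rw [mem_Icc] at hn
  exact ⟨n, hn.1, hn.2, fun i hi => hnu (hi ▸ mem_image_of_mem u (mem_univ i))⟩

theorem firstGap_mem (u : ι → ℕ) : 1 ≤ firstGap u ∧ ∀ i, u i ≠ firstGap u := by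
  obtain ⟨n, h1, -, h3⟩ := exists_gap_le_card_add_one u
  exact Nat.sInf_mem (s := {n | 1 ≤ n ∧ ∀ i, u i ≠ n}) ⟨n, h1, h3⟩

theorem firstGap_le_iff (u : ι → ℕ) (t : ℕ) :
    firstGap u ≤ t ↔ ∃ n, 1 ≤ n ∧ n ≤ t ∧ ∀ i, u i ≠ n :=
  ⟨fun h => ⟨firstGap u, (firstGap_mem u).1, h, (firstGap_mem u).2⟩,
    fun ⟨_, h1, h2, h3⟩ =>
      (Nat.sInf_le (s := {n | 1 ≤ n ∧ ∀ i, u i ≠ n}) ⟨h1, h3⟩).trans h2⟩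

theorem firstGap_le_card_add_one (u : ι → ℕ) : firstGap u ≤ Fintype.card ι + 1 :=
  (firstGap_le_iff u _).2 (exists_gap_le_card_add_one u)

theorem firstGap_min_le_iff (u : ι → ℕ) {t m : ℕ} (htm : t < m) :
    firstGap (fun i => min (u i) m) ≤ t ↔ firstGap u ≤ t := by
  simp only [firstGap_le_iff]
  refine exists_congr fun n => and_congr_right fun _ => and_congr_right fun hn =>
    forall_congr' fun i => ?_
  omega

theorem firstGap_min_eq (u : ι → ℕ) {m : ℕ} (hm : Fintype.card ι + 1 < m) :
    firstGap (fun i => min (u i) m) = firstGap u :=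
  le_antisymm ((firstGap_min_le_iff u ((firstGap_le_card_add_one u).trans_lt hm)).2 le_rfl)
    ((firstGap_min_le_iff u ((firstGap_le_card_add_one _).trans_lt hm)).1 le_rfl)

end FirstGap

section Geometric

variable (p q : ℝ)

/-- The law of `min U (n + 1)` for `U ~ Geometric(p)` on `{1, 2, …}`. -/
noncomputable def truncGeom (n k : ℕ) : ℝ := if k ≤ n then p * q ^ (k - 1) else q ^ n

/-- With `a = q + p z`, `V_t = ∏ s, geomPayoff a z t (U s)`. -/
noncomputable def geomPayoff (a z : ℝ) (t k : ℕ) : ℝ :=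
  if k ≤ t then z / a ^ k else 1 / a ^ t

noncomputable def stoppedPayoff {ι : Type*} [Fintype ι] (a z : ℝ) (w : ι → ℕ) : ℝ :=
  ∏ i, geomPayoff a z (firstGap w) (w i)

variable {p q}

theorem sum_Ioc_geom (hpq : p + q = 1) {t n : ℕ} (h : t ≤ n) :
    ∑ k ∈ Ioc t n, p * q ^ (k - 1) = q ^ t - q ^ n := by
  induction n, h using Nat.le_induction with
  | base => simp
  | succ n hn ih =>
    rw [sum_Ioc_succ_top hn, ih, Nat.add_sub_cancel, pow_succ]
    linear_combination q ^ n * hpq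

theorem sum_Ioc_truncGeom (hpq : p + q = 1) {t n : ℕ} (h : t ≤ n) :
    ∑ k ∈ Ioc t (n + 1), truncGeom p q n k = q ^ t := by
  rw [sum_Ioc_succ_top h, sum_congr rfl fun k hk => by rw [truncGeom, if_pos (mem_Ioc.1 hk).2],
    sum_Ioc_geom hpq h, truncGeom, if_neg (by omega)]
  ring

theorem sum_Ioc_truncGeom_mul_geomPayoff_succ (hpq : p + q = 1) {a z : ℝ} (ha : a = q + p * z)
    (ha0 : a ≠ 0) {t n : ℕ} (h : t < n) :
    ∑ k ∈ Ioc t (n + 1), truncGeom p q n k * geomPayoff a z (t + 1) k =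
      ∑ k ∈ Ioc t (n + 1), truncGeom p q n k * geomPayoff a z t k := by
  have hsilent (s : ℕ) : ∀ k ∈ Ioc s (n + 1),
      truncGeom p q n k * geomPayoff a z s k = truncGeom p q n k * (1 / a ^ s) :=
    fun k hk => by rw [geomPayoff, if_neg (by simp only [mem_Ioc] at hk; omega)]
  rw [sum_congr rfl (hsilent t), ← sum_mul, sum_Ioc_truncGeom hpq h.le,
    ← insert_Ioc_add_one_left_eq_Ioc (by omega : t < n + 1), sum_insert (by simp),
    sum_congr rfl (hsilent (t + 1)), ← sum_mul, sum_Ioc_truncGeom hpq h, geomPayoff,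
    if_pos le_rfl, truncGeom, if_pos (show t + 1 ≤ n from h), Nat.add_sub_cancel]
  field_simp
  rw [ha, Nat.succ_eq_add_one]
  ring

theorem geomPayoff_min (a z : ℝ) {t m : ℕ} (h : t < m) (k : ℕ) :
    geomPayoff a z t (min k m) = geomPayoff a z t k := by
  by_cases hk : k ≤ t
  · rw [min_eq_left (by omega)]
  · have : ¬ min k m ≤ t := by omega
    simp only [geomPayoff, hk, this, if_false]

theorem stoppedPayoff_min {ι : Type*} [Fintype ι] (a z : ℝ) (u : ι → ℕ) {m : ℕ}
    (hm : Fintype.card ι + 1 < m) :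
    stoppedPayoff a z (fun i => min (u i) m) = stoppedPayoff a z u := by
  rw [stoppedPayoff, stoppedPayoff, firstGap_min_eq u hm]
  exact prod_congr rfl fun i _ =>
    geomPayoff_min a z ((firstGap_le_card_add_one u).trans_lt hm) (u i)

theorem sum_truncGeom_mul_stoppedPayoff {ι : Type*} [Fintype ι] [DecidableEq ι]
    (hpq : p + q = 1) {a z : ℝ} (ha : a = q + p * z) (ha0 : a ≠ 0) {n : ℕ}
    (hn : Fintype.card ι < n) :
    ∑ w ∈ Fintype.piFinset (fun _ : ι => Ioc 0 (n + 1)),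
      (∏ i, truncGeom p q n (w i)) * stoppedPayoff a z w = 1 := by
  have hfrozen (t : ℕ) : ∀ k ≤ t, geomPayoff a z (t + 1) k = geomPayoff a z t k :=
    fun k hk => by simp only [geomPayoff, hk, hk.trans t.le_succ, if_true]
  have hmart (t : ℕ) (ht : t < n) :
      ∑ k ∈ Ioc 0 (n + 1) with t < k, truncGeom p q n k * geomPayoff a z (t + 1) k =
        ∑ k ∈ Ioc 0 (n + 1) with t < k, truncGeom p q n k * geomPayoff a z t k := by
    have htail : (Ioc 0 (n + 1)).filter (t < ·) = Ioc t (n + 1) := by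
      ext k
      simp only [mem_filter, mem_Ioc]
      omega
    rw [htail]
    exact sum_Ioc_truncGeom_mul_geomPayoff_succ hpq ha ha0 ht
  have hstop (t : ℕ) (w : ι → ℕ) :
      firstGap w ≤ t ↔ firstGap (fun i => min (w i) (t + 1)) ≤ t :=
    (firstGap_min_le_iff w t.lt_succ_self).symm
  simp only [stoppedPayoff, ← prod_mul_distrib]
  rw [sum_prod_stopped_eq_pow _ _ _ _ n hfrozen hmart hstop
    fun w => (firstGap_le_card_add_one w).trans hn]
  rw [sum_congr rfl fun k hk => by rw [geomPayoff, if_neg (by simp at hk; omega)],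
    ← sum_mul, sum_Ioc_truncGeom hpq (Nat.zero_le n)]
  simp

end Geometric

theorem pow_div_pow_eq_stoppedPayoff {r : ℕ} {u : ℕ → ℕ} (hu : ∀ s < r, 1 ≤ u s)
    {X : ℕ → ℕ} (hX : ∀ n, X n = #{s ∈ range r | u s = n}) {T Y M : ℕ}
    (hT : T = sInf {n | 1 ≤ n ∧ X n = 0}) (hY : Y = ∑ n ∈ Ico 1 T, X n)
    (hM : M = ∑ s ∈ range r, if 1 ≤ u s ∧ u s < T then u s else T) (a z : ℝ) :
    z ^ Y / a ^ M = stoppedPayoff a z fun i : Fin r => u i := by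
  have hgap : T = firstGap fun i : Fin r => u i := by
    simp only [hT, firstGap, hX, card_eq_zero, filter_eq_empty_iff, mem_range, Fin.forall_iff]
  have hmiss (s : ℕ) (hs : s < r) : u s ≠ T := by
    rw [hgap]
    exact (firstGap_mem fun i : Fin r => u i).2 ⟨s, hs⟩
  have hcount : Y = ∑ s ∈ range r, if u s < T then 1 else 0 := by
    simp only [hY, hX, card_filter]
    rw [sum_comm]
    refine sum_congr rfl fun s hs => ?_
    have := hu s (mem_range.1 hs)
    simp only [sum_ite_eq, mem_Ico, this, true_and]
  rw [stoppedPayoff, ← hgap, hcount, hM, ← prod_pow_eq_pow_sum, ← prod_pow_eq_pow_sum,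
    ← prod_div_distrib,
    Fin.prod_univ_eq_prod_range (fun s => geomPayoff a z T (u s)) r]
  refine prod_congr rfl fun s hs => ?_
  have h1 := hu s (mem_range.1 hs)
  have h2 := hmiss s (mem_range.1 hs)
  by_cases hlt : u s < T
  · simp [geomPayoff, hlt, h1, hlt.le]
  · simp [geomPayoff, hlt, show ¬ u s ≤ T by omega]

section Law

variable {Ω : Type*} [MeasurableSpace Ω] {μ : Measure Ω}

theorem integral_comp_eq_sum_of_ae_mem {α : Type*} [MeasurableSpace α]
    [MeasurableSingletonClass α] [Countable α] [IsFiniteMeasure μ] {W : Ω → α}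
    (hW : Measurable W) (S : Finset α) (hS : ∀ᵐ ω ∂μ, W ω ∈ S) (G : α → ℝ) :
    ∫ ω, G (W ω) ∂μ = ∑ w ∈ S, μ.real (W ⁻¹' {w}) * G w := by
  have hmap : ∀ᵐ w ∂μ.map W, w ∈ (S : Set α) :=
    (ae_map_iff hW.aemeasurable S.finite_toSet.measurableSet).2 hS
  rw [← integral_map hW.aemeasurable (measurable_of_countable G).aestronglyMeasurable,
    ← Measure.restrict_eq_self_of_ae_mem hmap,
    setIntegral_finset S (IntegrableOn.of_finite S.finite_toSet)]
  simp [map_measureReal_apply hW (measurableSet_singleton _)]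

theorem measureReal_iInter_preimage_eq_prod {ι β : Type*} [Fintype ι]
    [MeasurableSpace β] {U : ι → Ω → β} (hind : iIndepFun U μ) {E : ι → Set β}
    (hE : ∀ i, MeasurableSet (E i)) :
    μ.real (⋂ i, U i ⁻¹' E i) = ∏ i, μ.real (U i ⁻¹' E i) := by
  simpa [measureReal_def, ENNReal.toReal_prod] using
    congrArg ENNReal.toReal (hind.measure_inter_preimage_eq_mul univ fun i _ => hE i)

theorem ae_one_le_of_measure_eq_zero {ι : Type*} [Countable ι] {U : ι → Ω → ℕ}
    (hU0 : ∀ i, μ {ω | U i ω = 0} = 0) : ∀ᵐ ω ∂μ, ∀ i, 1 ≤ U i ω := by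
  rw [ae_all_iff]
  intro i
  rw [ae_iff]
  simpa [Nat.lt_one_iff] using hU0 i

variable [IsProbabilityMeasure μ] {p q : ℝ}

theorem measureReal_min_eq_truncGeom {U : Ω → ℕ} (hUm : Measurable U) (hpq : p + q = 1)
    (hp : 0 ≤ p) (hq : 0 ≤ q)
    (hU : ∀ k, 1 ≤ k → μ {ω | U ω = k} = ENNReal.ofReal (p * q ^ (k - 1)))
    (hU0 : μ {ω | U ω = 0} = 0) {n k : ℕ} (hk : k ∈ Ioc 0 (n + 1)) :
    μ.real {ω | min (U ω) (n + 1) = k} = truncGeom p q n k := by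
  have hpoint (j : ℕ) (hj : 1 ≤ j) : μ.real (U ⁻¹' {j}) = p * q ^ (j - 1) := by
    rw [measureReal_def, show U ⁻¹' {j} = {ω | U ω = j} from rfl, hU j hj,
      ENNReal.toReal_ofReal (by positivity)]
  rw [mem_Ioc] at hk
  rw [truncGeom]
  split_ifs with hkn
  · rw [← hpoint k hk.1]
    congr 1
    ext ω
    simp only [Set.mem_ofPred_eq, Set.mem_preimage, Set.mem_singleton_iff]
    omega
  · have hset : {ω | min (U ω) (n + 1) = k} = (U ⁻¹' ↑(insert 0 (Ioc 0 n)))ᶜ := by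
      ext ω
      simp only [Set.mem_ofPred_eq, Set.mem_compl_iff, Set.mem_preimage, coe_insert, coe_Ioc,
        Set.mem_insert_iff, Set.mem_Ioc]
      omega
    rw [hset, probReal_compl_eq_one_sub (hUm (Finset.measurableSet _)),
      ← sum_measureReal_preimage_singleton _ fun _ _ => hUm (measurableSet_singleton _),
      sum_insert (by simp), sum_congr rfl fun j hj => hpoint j (mem_Ioc.1 hj).1,
      sum_Ioc_geom hpq (Nat.zero_le n), measureReal_def,
      show U ⁻¹' {0} = {ω | U ω = 0} from rfl, hU0]
    simp

theorem integral_comp_min_eq_sum {ι : Type*} [Fintype ι] [DecidableEq ι] {U : ι → Ω → ℕ}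
    (hUm : ∀ i, Measurable (U i)) (hind : iIndepFun U μ) (hpq : p + q = 1) (hp : 0 ≤ p)
    (hq : 0 ≤ q)
    (hU : ∀ i k, 1 ≤ k → μ {ω | U i ω = k} = ENNReal.ofReal (p * q ^ (k - 1)))
    (hU0 : ∀ i, μ {ω | U i ω = 0} = 0) (n : ℕ) (G : (ι → ℕ) → ℝ) :
    ∫ ω, G (fun i => min (U i ω) (n + 1)) ∂μ =
      ∑ w ∈ Fintype.piFinset (fun _ : ι => Ioc 0 (n + 1)),
        (∏ i, truncGeom p q n (w i)) * G w := by
  have hW : Measurable fun ω i => min (U i ω) (n + 1) :=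
    measurable_pi_lambda _ fun i => (hUm i).min measurable_const
  have hbox : ∀ᵐ ω ∂μ, (fun i => min (U i ω) (n + 1)) ∈
      Fintype.piFinset (fun _ : ι => Ioc 0 (n + 1)) := by
    filter_upwards [ae_one_le_of_measure_eq_zero hU0] with ω hω
    simp only [Fintype.mem_piFinset, mem_Ioc]
    exact fun i => ⟨lt_min (hω i) n.succ_pos, min_le_right _ _⟩
  rw [integral_comp_eq_sum_of_ae_mem hW _ hbox]
  refine sum_congr rfl fun w hw => ?_
  rw [Fintype.mem_piFinset] at hw
  have hfiber : (fun ω i => min (U i ω) (n + 1)) ⁻¹' {w} =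
      ⋂ i, U i ⁻¹' {k | min k (n + 1) = w i} := by
    ext ω
    simp [funext_iff]
  rw [hfiber, measureReal_iInter_preimage_eq_prod hind fun _ => MeasurableSet.of_discrete]
  exact congrArg (· * G w) (prod_congr rfl fun i _ =>
    measureReal_min_eq_truncGeom (hUm i) hpq hp hq (hU i) (hU0 i) (hw i))

end Law

end GeometricResponse

open GeometricResponse in
/-- **Martingale identity.** With `r` clients whose response times `U 0, …, U (r-1)` are
i.i.d. `Geometric(p)` (`P(U s = n) = p q^{n-1}`, `n ≥ 1`, `q = 1 - p`),
`X n = #{s < r : U s = n}`, `T = min {n ≥ 1 : X n = 0}`, `Y = X 1 + ⋯ + X (T-1)` the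
total yield and `M = ∑_{s < r} (U s ∧ T)` the total marketing effort:
for every `z > 0`, `E[z^Y / (q + p z)^M] = 1`. -/
theorem optional_stopping_identity
    {Ω : Type*} [MeasurableSpace Ω] (μ : Measure Ω) [IsProbabilityMeasure μ]
    (p : ℝ) (hp : 0 < p ∧ p < 1) (q : ℝ) (hq : q = 1 - p)
    (r : ℕ)
    (U : ℕ → Ω → ℕ) (hUm : ∀ s, Measurable (U s))
    (hindep : iIndepFun U μ)
    (hU : ∀ s, ∀ n, 1 ≤ n → μ {ω | U s ω = n} = ENNReal.ofReal (p * q ^ (n - 1)))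
    (hU0 : ∀ s, μ {ω | U s ω = 0} = 0)
    (X : ℕ → Ω → ℕ)
    (hX : ∀ n ω, X n ω = ((Finset.range r).filter (fun s => U s ω = n)).card)
    (T : Ω → ℕ) (hT : ∀ ω, T ω = sInf {n | 1 ≤ n ∧ X n ω = 0})
    (Y : Ω → ℕ) (hY : ∀ ω, Y ω = ∑ n ∈ Finset.Ico 1 (T ω), X n ω)
    (M : Ω → ℕ)
    (hM : ∀ ω, M ω = ∑ s ∈ Finset.range r,
        (if 1 ≤ U s ω ∧ U s ω < T ω then U s ω else T ω))
    (z : ℝ) (hz : 0 < z) :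
    ∫ ω, z ^ (Y ω) / (q + p * z) ^ (M ω) ∂μ = 1 := by
  obtain ⟨hp0, hp1⟩ := hp
  have hpq : p + q = 1 := by rw [hq]; ring
  have hq0 : 0 < q := by linarith
  have ha0 : q + p * z ≠ 0 := by positivity
  calc ∫ ω, z ^ Y ω / (q + p * z) ^ M ω ∂μ
      = ∫ ω, stoppedPayoff (q + p * z) z (fun i : Fin r => min (U i ω) (r + 1 + 1)) ∂μ := by
        refine integral_congr_ae ?_
        filter_upwards [ae_one_le_of_measure_eq_zero hU0] with ω hω
        rw [pow_div_pow_eq_stoppedPayoff (fun s _ => hω s) (hX · ω) (hT ω) (hY ω) (hM ω),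
          stoppedPayoff_min _ _ _ (by simp)]
    _ = ∑ w ∈ Fintype.piFinset (fun _ : Fin r => Ioc 0 (r + 1 + 1)),
          (∏ i, truncGeom p q (r + 1) (w i)) * stoppedPayoff (q + p * z) z w :=
        integral_comp_min_eq_sum (U := fun i : Fin r => U i) (fun i => hUm i)
          (hindep.precomp Fin.val_injective) hpq hp0.le
          (by linarith) (fun i => hU i) (fun i => hU0 i) (r + 1) _
    _ = 1 := sum_truncGeom_mul_stoppedPayoff hpq rfl ha0 (by simp)
end
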